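/- arXiv:0906.4307 — 9 statements merged into one kernel-verified Lean document; each statement's English description precedes it below -/
import Mathlib

section
/- Let n ≥ 2 be an integer and q = exp(iπ/n). Then for all integers a, b with 1 ≤ a ≤ n−1 and 1 ≤ b ≤ n−1, the quantum integers satisfy the truncated SU(2) level n fusion rule: [a]_q [b]_q = Σ_{j=0}^{m−1} [ |a−b| + 1 + 2j ]_q, where m = min(a, b, n−a, n−b). Equivalently, [a]_q[b]_q = Σ_c [c]_q where c runs over the integers with |a−b|+1 ≤ c ≤ min(a+b−1, 2n−a−b−1) and c ≡ a+b−1 (mod 2). -/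
/-- The quantum integer `[m]_q = (q^m - q^{-m})/(q - q⁻¹)`. -/
noncomputable def qint (q : ℂ) (m : ℤ) : ℂ := (q ^ m - q ^ (-m)) / (q - q⁻¹)

lemma qstep (q : ℂ) (hq : q ≠ 0) (e : ℤ) :
    (q - q⁻¹) * (q ^ e - q ^ (-e)) =
      q ^ (e + 1) + q ^ (-(e + 1)) - (q ^ (e - 1) + q ^ (-(e - 1))) := by
  have h1 : q ^ e ≠ 0 := zpow_ne_zero _ hq
  rw [show -(e+1) = -e - 1 by ring, show -(e-1) = -e + 1 by ring,
    zpow_add₀ hq, zpow_sub₀ hq, zpow_sub₀ hq, zpow_add₀ hq, zpow_neg, zpow_one]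
  field_simp
  ring

lemma qtel (q : ℂ) (hq : q ≠ 0) (d : ℤ) (M : ℕ) :
    (q - q⁻¹) * ∑ j ∈ Finset.range M, (q ^ (d + 1 + 2 * (j:ℤ)) - q ^ (-(d + 1 + 2 * (j:ℤ)))) =
      q ^ (d + 2 * M) + q ^ (-(d + 2 * M)) - (q ^ d + q ^ (-d)) := by
  induction M with
  | zero => simp
  | succ M ih =>
    rw [Finset.sum_range_succ, mul_add, ih, qstep q hq]
    push_cast
    rw [show d + 1 + 2*(M:ℤ) + 1 = d + 2*((M:ℤ)+1) by ring,
       show d + 1 + 2*(M:ℤ) - 1 = d + 2*M by ring]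
    ring

/-- Truncated SU(2) level `n` fusion rule for quantum integers at `q = exp(iπ/n)`:
for `1 ≤ a, b ≤ n-1`,
`[a]_q [b]_q = Σ_{j=0}^{m-1} [ |a-b| + 1 + 2j ]_q` where `m = min(a, b, n-a, n-b)`. -/
theorem quantum_integer_fusion (n : ℕ) (hn : 2 ≤ n)
    (q : ℂ) (hq : q = Complex.exp (Real.pi * Complex.I / n))
    (a b : ℕ) (ha : 1 ≤ a) (ha' : a ≤ n - 1) (hb : 1 ≤ b) (hb' : b ≤ n - 1) :
    qint q a * qint q b =
      ∑ j ∈ Finset.range (min (min a b) (min (n - a) (n - b))),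
        qint q (|(a : ℤ) - (b : ℤ)| + 1 + 2 * j) := by
  have hn0 : (n : ℂ) ≠ 0 := Nat.cast_ne_zero.mpr (by omega)
  have hq0 : q ≠ 0 := by rw [hq]; exact Complex.exp_ne_zero _
  have hq2n : q ^ ((2 * n : ℕ) : ℤ) = 1 := by
    rw [zpow_natCast, hq, ← Complex.exp_nat_mul]
    rw [show ((2 * n : ℕ) : ℂ) * (Real.pi * Complex.I / n) = 2 * Real.pi * Complex.I by
      push_cast; field_simp]
    exact Complex.exp_two_pi_mul_I
  have h2pi : (2 : ℂ) * Real.pi * Complex.I ≠ 0 := by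
    simp [Real.pi_ne_zero, Complex.I_ne_zero]
  have hq2 : q ^ (2:ℕ) ≠ 1 := by
    rw [hq, ← Complex.exp_nat_mul]
    intro h
    rw [Complex.exp_eq_one_iff] at h
    obtain ⟨k, hk⟩ := h
    have h1 : ((k:ℂ) * n - 1) * (2 * Real.pi * Complex.I) = 0 := by
      field_simp at hk
      push_cast at hk
      linear_combination (-(Real.pi * Complex.I)) * hk
    have h2 : (k:ℂ) * n = 1 := by
      have := mul_eq_zero.mp h1
      rcases this with h | h
      · exact sub_eq_zero.mp h
      · exact absurd h h2pi
    have h3 : (k * n : ℤ) = 1 := by exact_mod_cast h2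
    have h4 : (n:ℤ) ∣ 1 := ⟨k, by rw [← h3]; ring⟩
    have := Int.le_of_dvd one_pos h4
    omega
  have hu : q - q⁻¹ ≠ 0 := by
    intro h
    apply hq2
    have h' : q = q⁻¹ := sub_eq_zero.mp h
    have : q * q = 1 := by
      calc q * q = q⁻¹ * q := by rw [← h']
      _ = 1 := inv_mul_cancel₀ hq0
    rw [pow_two]; exact this
  set m : ℕ := min (min a b) (min (n - a) (n - b)) with hm
  set d : ℤ := |(a : ℤ) - (b : ℤ)| with hd
  have h2n : q ^ ((2:ℤ) * n) = 1 := by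
    rw [← hq2n]; norm_num
  have hs : (d + 2 * m = (a:ℤ) + b) ∨ (d + 2 * m = 2 * (n:ℤ) - ((a:ℤ) + b)) := by
    rcases abs_cases ((a:ℤ) - (b:ℤ)) with ⟨h1, h2⟩ | ⟨h1, h2⟩ <;> rw [hd, h1] <;> omega
  have hpow : q ^ (d + 2 * (m:ℤ)) + q ^ (-(d + 2 * (m:ℤ))) =
      q ^ ((a:ℤ) + b) + q ^ (-((a:ℤ) + b)) := by
    rcases hs with h | h
    · rw [h]
    · have hinv : q ^ (-((2:ℤ) * n)) = 1 := by rw [zpow_neg, h2n, inv_one]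
      rw [h, show (2 * (n:ℤ) - ((a:ℤ) + b)) = 2 * n + -((a:ℤ) + b) by ring,
        zpow_add₀ hq0, h2n, one_mul,
        show -(2 * (n:ℤ) + -((a:ℤ) + b)) = ((a:ℤ) + b) + -(2 * (n:ℤ)) by ring,
        zpow_add₀ hq0, hinv, mul_one, add_comm]
  have habs : q ^ d + q ^ (-d) = q ^ ((a:ℤ) - b) + q ^ (-((a:ℤ) - b)) := by
    rcases abs_cases ((a:ℤ) - (b:ℤ)) with ⟨h1, h2⟩ | ⟨h1, h2⟩
    · rw [hd, h1]
    · rw [hd, h1, neg_neg, add_comm]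
  have hnum : (q ^ (a:ℤ) - q ^ (-(a:ℤ))) * (q ^ (b:ℤ) - q ^ (-(b:ℤ))) =
      q ^ (d + 2 * (m:ℤ)) + q ^ (-(d + 2 * (m:ℤ))) - (q ^ d + q ^ (-d)) := by
    rw [hpow, habs]
    simp only [zpow_neg, zpow_add₀ hq0, zpow_sub₀ hq0]
    field_simp
    ring
  have key := qtel q hq0 d m
  calc qint q (a:ℤ) * qint q (b:ℤ)
      = ((q ^ (a:ℤ) - q ^ (-(a:ℤ))) * (q ^ (b:ℤ) - q ^ (-(b:ℤ)))) / (q - q⁻¹) ^ 2 := by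
        rw [qint, qint, div_mul_div_comm, sq]
    _ = ((q - q⁻¹) * ∑ j ∈ Finset.range m,
          (q ^ (d + 1 + 2 * (j:ℤ)) - q ^ (-(d + 1 + 2 * (j:ℤ))))) / (q - q⁻¹) ^ 2 := by
        rw [key, hnum]
    _ = (∑ j ∈ Finset.range m,
          (q ^ (d + 1 + 2 * (j:ℤ)) - q ^ (-(d + 1 + 2 * (j:ℤ))))) / (q - q⁻¹) := by
        rw [sq, mul_div_mul_left _ _ hu]
    _ = ∑ j ∈ Finset.range m, qint q (d + 1 + 2 * (j:ℤ)) := by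
        rw [Finset.sum_div]
        rfl
end

section
/- Let n ≥ 3 be an integer and q = exp(iπ/(2n+1)). Define for integers i with 2 ≤ i ≤ n the squared cell values A(i) = [i][2i−3][2i−1]/[i−1] (for the triangle (i−1,i,i)), B(i) = [i−1][2i−1][2i+1]/[i] (for the triangle (i,i,i+1), also defined for i = 1 where it equals 0), and C(i) = [2i−1]²/([i−1][i]) (for the triangle (i,i,i)), with all quantum integers at q. Then these values satisfy the type I and type II frame equations of the graph 𝒜^((2n+1)*): (a) A(2) = [2][3]; (b) B(l) + A(l+1) = [2][2l−1][2l+1] for 2 ≤ l ≤ n−1; (c) A(l) + C(l) + B(l) = [2][2l−1]² for 2 ≤ l ≤ n−1; (d) A(n) + C(n) = [2]³; (e) A(l)·B(l) = [2l−3][2l−1]²[2l+1] for 2 ≤ l ≤ n−1; (f) A(l)·( B(l−1)/[2l−3] + C(l)/[2l−1] ) = [2l−3][2l−1]² for 2 ≤ l ≤ n. (The same system of equations is satisfied by the ℤ₃-symmetric cells of the graph 𝒟^((2n+1)*).) -/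
/-- The quantum integer `[m]_q` at `q = exp(iπ/N)`, namely `sin(mπ/N)/sin(π/N)`, which is real. -/
noncomputable def qi (N : ℕ) (m : ℤ) : ℝ := Real.sin (m * Real.pi / N) / Real.sin (Real.pi / N)

open Real

private lemma keyB (x t : ℝ) : sin (x - t) + sin (x + t) = 2 * cos t * sin x := by
  rw [Real.sin_sub, Real.sin_add]; ring

private lemma keyF (x t : ℝ) : sin (x - 2*t) * sin x + sin t ^ 2 = sin (x - t) ^ 2 := by
  simp only [Real.sin_sub, Real.cos_sub, Real.sin_two_mul, Real.cos_two_mul]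
  linear_combination (-(sin t)^2) * Real.sin_sq_add_cos_sq x + (sin x)^2 * Real.sin_sq_add_cos_sq t

private lemma keyC (x t : ℝ) :
    sin x ^ 2 * sin (2*x - 3*t) + sin (x - t) ^ 2 * sin (2*x + t)
      + sin (2*x - t) * sin t ^ 2
    = 2 * cos t * sin (2*x - t) * sin (x - t) * sin x := by
  simp only [Real.sin_sub, Real.sin_add, Real.cos_sub, Real.cos_add,
    Real.sin_two_mul, Real.cos_two_mul, Real.sin_three_mul, Real.cos_three_mul]
  linear_combination
    (-(sin t)^3 + 2*(cos x)^2*(sin t)^3 - 6*(sin x)*(cos x)*(sin t)^2*(cos t)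
      - 6*(sin x)^2*(sin t) + 6*(sin x)^2*(sin t)*(cos t)^2 + 6*(sin x)^2*(sin t)^3)
      * Real.sin_sq_add_cos_sq x
    + (3*(sin x)^2*(sin t) + 6*(sin x)^3*(cos x)*(cos t) - 6*(sin x)^4*(sin t))
      * Real.sin_sq_add_cos_sq t

private lemma keyD (h : ℝ) :
    sin (8*h) * cos h ^ 2 * sin (2*h) + sin (4*h) * sin (2*h) ^ 3
      = sin (4*h) ^ 2 * cos (3*h) * cos h := by
  rw [show (8:ℝ)*h = 2*(2*(2*h)) by ring, show (4:ℝ)*h = 2*(2*h) by ring]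
  simp only [Real.sin_two_mul, Real.cos_two_mul, Real.cos_three_mul]
  linear_combination (-32*(sin h)^2*(cos h)^4 + 64*(sin h)^2*(cos h)^6) * Real.sin_sq_add_cos_sq h


private lemma sin_pos_aux (N : ℕ) (m : ℤ) (h1 : 0 < m) (h2 : m < N) :
    0 < Real.sin (m * Real.pi / N) := by
  have hN : (0:ℝ) < (N:ℝ) := by exact_mod_cast h1.trans h2
  have hm : (0:ℝ) < (m:ℝ) := by exact_mod_cast h1
  have hmN : (m:ℝ) < (N:ℝ) := by exact_mod_cast h2
  apply Real.sin_pos_of_pos_of_lt_pi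
  · positivity
  · rw [div_lt_iff₀ hN]
    nlinarith [Real.pi_pos]

private lemma qi_pos (N : ℕ) (m : ℤ) (h1 : 0 < m) (h2 : m < N) (hN : (1:ℤ) < N) :
    0 < qi N m := by
  apply div_pos (sin_pos_aux N m h1 h2)
  have := sin_pos_aux N 1 one_pos hN
  simpa using this

private lemma qi_one (N : ℕ) (hs : Real.sin (Real.pi / N) ≠ 0) : qi N 1 = 1 := by
  simp [qi, div_self hs]

private lemma qi_two_mul (N : ℕ) (hs : Real.sin (Real.pi / N) ≠ 0) (m : ℤ) :
    qi N (m-1) + qi N (m+1) = qi N 2 * qi N m := by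
  unfold qi
  push_cast
  rw [show ((m:ℝ)-1) * Real.pi / N = (m:ℝ) * Real.pi / N - Real.pi / N by ring,
    show ((m:ℝ)+1) * Real.pi / N = (m:ℝ) * Real.pi / N + Real.pi / N by ring,
    show (2:ℝ) * Real.pi / N = 2 * (Real.pi / N) by ring, Real.sin_two_mul]
  generalize (m:ℝ) * Real.pi / (N:ℝ) = x
  generalize ht : Real.pi / (N:ℝ) = t
  rw [ht] at hs
  field_simp
  linear_combination keyB x t

private lemma qi_sq (N : ℕ) (hs : Real.sin (Real.pi / N) ≠ 0) (m : ℤ) :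
    qi N (m-2) * qi N m + 1 = qi N (m-1) ^ 2 := by
  unfold qi
  push_cast
  rw [show ((m:ℝ)-2) * Real.pi / N = (m:ℝ) * Real.pi / N - 2*(Real.pi / N) by ring,
    show ((m:ℝ)-1) * Real.pi / N = (m:ℝ) * Real.pi / N - Real.pi / N by ring]
  generalize (m:ℝ) * Real.pi / (N:ℝ) = x
  generalize ht : Real.pi / (N:ℝ) = t
  rw [ht] at hs
  field_simp
  linear_combination keyF x t

private lemma qi_c (N : ℕ) (hs : Real.sin (Real.pi / N) ≠ 0) (l : ℤ) :
    qi N l ^ 2 * qi N (2*l-3) + qi N (l-1) ^ 2 * qi N (2*l+1) + qi N (2*l-1)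
      = qi N 2 * qi N (2*l-1) * qi N (l-1) * qi N l := by
  unfold qi
  push_cast
  rw [show ((l:ℝ)-1) * Real.pi / N = (l:ℝ) * Real.pi / N - Real.pi / N by ring,
    show (2*(l:ℝ)-3) * Real.pi / N = 2*((l:ℝ) * Real.pi / N) - 3*(Real.pi / N) by ring,
    show (2*(l:ℝ)+1) * Real.pi / N = 2*((l:ℝ) * Real.pi / N) + (Real.pi / N) by ring,
    show (2*(l:ℝ)-1) * Real.pi / N = 2*((l:ℝ) * Real.pi / N) - (Real.pi / N) by ring,
    show (2:ℝ) * Real.pi / N = 2 * (Real.pi / N) by ring, Real.sin_two_mul]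
  generalize (l:ℝ) * Real.pi / (N:ℝ) = x
  generalize ht : Real.pi / (N:ℝ) = t
  rw [ht] at hs
  field_simp
  linear_combination keyC x t

private lemma qi_refl (N : ℕ) (hN : (N:ℝ) ≠ 0) (a : ℤ) : qi N ((N:ℤ) - a) = qi N a := by
  unfold qi
  push_cast
  rw [show ((N:ℝ) - (a:ℝ)) * Real.pi / N = Real.pi - a * Real.pi / N by field_simp,
    Real.sin_pi_sub]

private lemma qi_d (n : ℕ) (hn : 1 ≤ n) :
    qi (2*n+1) 4 * qi (2*n+1) (n:ℤ) ^ 2 + qi (2*n+1) 2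
      = qi (2*n+1) 2 ^ 2 * qi (2*n+1) ((n:ℤ)-1) * qi (2*n+1) (n:ℤ) := by
  have hd : (2*(n:ℝ)+1) ≠ 0 := by positivity
  have hs : Real.sin (Real.pi / ((2*n+1:ℕ):ℝ)) ≠ 0 := by
    refine ne_of_gt ?_
    have := sin_pos_aux (2*n+1) 1 one_pos (by push_cast; omega)
    simpa using this
  unfold qi
  push_cast at hs ⊢
  rw [show Real.pi / (2*(n:ℝ)+1) = 2*(Real.pi / (2*(2*(n:ℝ)+1))) by field_simp] at hs ⊢
  rw [show (4:ℝ) * Real.pi / (2*(n:ℝ)+1) = 8*(Real.pi / (2*(2*(n:ℝ)+1))) by field_simp; ring,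
    show (2:ℝ) * Real.pi / (2*(n:ℝ)+1) = 4*(Real.pi / (2*(2*(n:ℝ)+1))) by field_simp; ring,
    show (n:ℝ) * Real.pi / (2*(n:ℝ)+1)
        = Real.pi/2 - Real.pi / (2*(2*(n:ℝ)+1)) by field_simp; ring,
    show ((n:ℝ)-1) * Real.pi / (2*(n:ℝ)+1)
        = Real.pi/2 - 3*(Real.pi / (2*(2*(n:ℝ)+1))) by field_simp; ring,
    Real.sin_pi_div_two_sub, Real.sin_pi_div_two_sub]
  generalize ht : Real.pi / (2*(2*(n:ℝ)+1)) = h at hs ⊢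
  have hs' : Real.sin (h*2) ≠ 0 := by rwa [mul_comm]
  field_simp
  rw [mul_comm h 2, mul_comm h 4, mul_comm h 3]
  linear_combination keyD h

/-- The squared cell values of the graph `𝒜^((2n+1)*)` satisfy its type I and type II frame
equations. Here, at `q = exp(iπ/(2n+1))`, `A i = [i][2i−3][2i−1]/[i−1]` (triangle `(i−1,i,i)`),
`B i = [i−1][2i−1][2i+1]/[i]` (triangle `(i,i,i+1)`), `C i = [2i−1]²/([i−1][i])`
(triangle `(i,i,i)`). -/
theorem Astar_odd_cells_frames (n : ℕ) (hn : 3 ≤ n) :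
    let N := 2 * n + 1
    let A : ℤ → ℝ := fun i => qi N i * qi N (2*i - 3) * qi N (2*i - 1) / qi N (i - 1)
    let B : ℤ → ℝ := fun i => qi N (i - 1) * qi N (2*i - 1) * qi N (2*i + 1) / qi N i
    let C : ℤ → ℝ := fun i => qi N (2*i - 1) ^ 2 / (qi N (i - 1) * qi N i)
    (A 2 = qi N 2 * qi N 3) ∧
    (∀ l : ℤ, 2 ≤ l → l ≤ (n : ℤ) - 1 →
      B l + A (l + 1) = qi N 2 * qi N (2*l - 1) * qi N (2*l + 1)) ∧
    (∀ l : ℤ, 2 ≤ l → l ≤ (n : ℤ) - 1 →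
      A l + C l + B l = qi N 2 * qi N (2*l - 1) ^ 2) ∧
    (A n + C n = qi N 2 ^ 3) ∧
    (∀ l : ℤ, 2 ≤ l → l ≤ (n : ℤ) - 1 →
      A l * B l = qi N (2*l - 3) * qi N (2*l - 1) ^ 2 * qi N (2*l + 1)) ∧
    (∀ l : ℤ, 2 ≤ l → l ≤ (n : ℤ) →
      A l * (B (l - 1) / qi N (2*l - 3) + C l / qi N (2*l - 1))
        = qi N (2*l - 3) * qi N (2*l - 1) ^ 2) := by
  intro N A B C
  have hNZ : ((2*n+1:ℕ):ℤ) = 2*(n:ℤ)+1 := by push_cast; ring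
  have hn' : (3:ℤ) ≤ (n:ℤ) := by exact_mod_cast hn
  have hs : Real.sin (Real.pi / ((2*n+1:ℕ):ℝ)) ≠ 0 := by
    refine ne_of_gt ?_
    have := sin_pos_aux (2*n+1) 1 one_pos (by push_cast; omega)
    simpa using this
  have hN0 : ((2*n+1:ℕ):ℝ) ≠ 0 := by push_cast; positivity
  have hq : ∀ m : ℤ, 0 < m → m < 2*(n:ℤ)+1 → qi (2*n+1) m ≠ 0 := by
    intro m h1 h2
    exact ne_of_gt (qi_pos (2*n+1) m h1 (by omega) (by omega))
  refine ⟨?_, ?_, ?_, ?_, ?_, ?_⟩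
  · -- (a)
    show qi N 2 * qi N (2*2 - 3) * qi N (2*2 - 1) / qi N (2 - 1) = qi N 2 * qi N 3
    norm_num
    rw [qi_one _ hs]
    ring
  · -- (b)
    intro l hl1 hl2
    show qi N (l - 1) * qi N (2*l - 1) * qi N (2*l + 1) / qi N l
        + qi N (l+1) * qi N (2*(l+1) - 3) * qi N (2*(l+1) - 1) / qi N (l + 1 - 1)
        = qi N 2 * qi N (2*l - 1) * qi N (2*l + 1)
    rw [show (2*(l+1) - 3 : ℤ) = 2*l - 1 by ring, show (2*(l+1) - 1 : ℤ) = 2*l + 1 by ring,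
      show (l + 1 - 1 : ℤ) = l by ring]
    have key := qi_two_mul (2*n+1) hs l
    have h1 : qi (2*n+1) l ≠ 0 := hq l (by omega) (by omega)
    simp only [N]
    field_simp
    linear_combination (qi (2*n+1) (2*l-1) * qi (2*n+1) (2*l+1)) * key
  · -- (c)
    intro l hl1 hl2
    show qi N l * qi N (2*l - 3) * qi N (2*l - 1) / qi N (l - 1)
        + qi N (2*l - 1) ^ 2 / (qi N (l - 1) * qi N l)
        + qi N (l - 1) * qi N (2*l - 1) * qi N (2*l + 1) / qi N l
        = qi N 2 * qi N (2*l - 1) ^ 2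
    have key := qi_c (2*n+1) hs l
    have h1 : qi (2*n+1) l ≠ 0 := hq l (by omega) (by omega)
    have h2 : qi (2*n+1) (l-1) ≠ 0 := hq (l-1) (by omega) (by omega)
    simp only [N]
    field_simp
    linear_combination qi (2*n+1) (2*l-1) * key
  · -- (d)
    show qi N (n:ℤ) * qi N (2*(n:ℤ) - 3) * qi N (2*(n:ℤ) - 1) / qi N ((n:ℤ) - 1)
        + qi N (2*(n:ℤ) - 1) ^ 2 / (qi N ((n:ℤ) - 1) * qi N (n:ℤ))
        = qi N 2 ^ 3
    rw [show (2*(n:ℤ) - 3) = ((2*n+1:ℕ):ℤ) - 4 by omega,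
      show (2*(n:ℤ) - 1) = ((2*n+1:ℕ):ℤ) - 2 by omega,
      qi_refl _ hN0 4, qi_refl _ hN0 2]
    have key := qi_d n (by omega)
    have h1 : qi (2*n+1) (n:ℤ) ≠ 0 := hq (n:ℤ) (by omega) (by omega)
    have h2 : qi (2*n+1) ((n:ℤ)-1) ≠ 0 := hq ((n:ℤ)-1) (by omega) (by omega)
    simp only [N]
    field_simp
    linear_combination qi (2*n+1) 2 * key
  · -- (e)
    intro l hl1 hl2
    show qi N l * qi N (2*l - 3) * qi N (2*l - 1) / qi N (l - 1)
        * (qi N (l - 1) * qi N (2*l - 1) * qi N (2*l + 1) / qi N l)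
        = qi N (2*l - 3) * qi N (2*l - 1) ^ 2 * qi N (2*l + 1)
    have h1 : qi (2*n+1) l ≠ 0 := hq l (by omega) (by omega)
    have h2 : qi (2*n+1) (l-1) ≠ 0 := hq (l-1) (by omega) (by omega)
    simp only [N]
    field_simp
  · -- (f)
    intro l hl1 hl2
    show qi N l * qi N (2*l - 3) * qi N (2*l - 1) / qi N (l - 1)
        * (qi N (l - 1 - 1) * qi N (2*(l-1) - 1) * qi N (2*(l-1) + 1) / qi N (l - 1) / qi N (2*l - 3)
          + qi N (2*l - 1) ^ 2 / (qi N (l - 1) * qi N l) / qi N (2*l - 1))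
        = qi N (2*l - 3) * qi N (2*l - 1) ^ 2
    rw [show (l - 1 - 1 : ℤ) = l - 2 by ring, show (2*(l-1) - 1 : ℤ) = 2*l - 3 by ring,
      show (2*(l-1) + 1 : ℤ) = 2*l - 1 by ring]
    have key := qi_sq (2*n+1) hs l
    have h1 : qi (2*n+1) l ≠ 0 := hq l (by omega) (by omega)
    have h2 : qi (2*n+1) (l-1) ≠ 0 := hq (l-1) (by omega) (by omega)
    have h3 : qi (2*n+1) (2*l-3) ≠ 0 := hq (2*l-3) (by omega) (by omega)
    have h4 : qi (2*n+1) (2*l-1) ≠ 0 := hq (2*l-1) (by omega) (by omega)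
    simp only [N]
    field_simp
    linear_combination key
end

section
/- Let q be a nonzero complex number with q² ≠ 1 and let b ≥ 1 be an integer such that [b]_q, [b+1]_q and [2b+1]_q are nonzero. Then [2]_q − [2b+3]_q [b−2]_q / ([2b+1]_q [b+1]_q) − [2b−1]_q [b+3]_q / ([2b+1]_q [b]_q) = [3]_q / ([b]_q [b+1]_q). (With a = 2b+1, this is the identity (1/[3])([2] − [a+2][(a−5)/2]/([a][(a+1)/2]) − [a−2][(a+5)/2]/([a][(a−1)/2])) = 1/([(a−1)/2][(a+1)/2]) showing that the diagonal Hecke weight of the graph 𝒜^((2n+1)*) agrees with the critical Boltzmann weight of Behrend–Evans.) -/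
set_option maxHeartbeats 1600000 in
/-- For `q ≠ 0` with `q² ≠ 1` and an integer `b ≥ 1` with `[b]_q`, `[b+1]_q`, `[2b+1]_q` nonzero:
`[2] − [2b+3][b−2]/([2b+1][b+1]) − [2b−1][b+3]/([2b+1][b]) = [3]/([b][b+1])`. -/
theorem Astar_diagonal_weight_identity (q : ℂ) (hq0 : q ≠ 0) (hq1 : q ^ 2 ≠ 1)
    (b : ℤ) (hb : 1 ≤ b)
    (h1 : qint q b ≠ 0) (h2 : qint q (b + 1) ≠ 0) (h3 : qint q (2*b + 1) ≠ 0) :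
    qint q 2 - qint q (2*b + 3) * qint q (b - 2) / (qint q (2*b + 1) * qint q (b + 1))
      - qint q (2*b - 1) * qint q (b + 3) / (qint q (2*b + 1) * qint q b)
      = qint q 3 / (qint q b * qint q (b + 1)) := by
  have hD : q ^ 2 - 1 ≠ 0 := sub_ne_zero.mpr hq1
  have hd : q - q⁻¹ ≠ 0 := by
    intro h
    apply hq1
    have hqq : q = q⁻¹ := by linear_combination h
    rw [pow_two]
    calc q * q = q * q⁻¹ := by rw [← hqq]
    _ = 1 := mul_inv_cancel₀ hq0
  set x := q ^ b with hxdef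
  have hx : x ≠ 0 := zpow_ne_zero _ hq0
  have hq2 : q ^ (2:ℤ) = q * q := by
    rw [show (2:ℤ) = 1 + 1 by norm_num, zpow_add₀ hq0, zpow_one]
  have hq3 : q ^ (3:ℤ) = q * q * q := by
    rw [show (3:ℤ) = 2 + 1 by norm_num, zpow_add₀ hq0, hq2, zpow_one]
  have eb1 : q ^ (b+1) = x * q := by rw [zpow_add₀ hq0, zpow_one]
  have e2b1 : q ^ (2*b+1) = x * x * q := by
    rw [show (2*b+1 : ℤ) = b + b + 1 by ring, zpow_add₀ hq0, zpow_add₀ hq0, zpow_one]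
  have e1 : q ^ (2*b+3) = x * x * (q*q*q) := by
    rw [show (2*b+3 : ℤ) = b + b + 3 by ring, zpow_add₀ hq0, zpow_add₀ hq0, hq3]
  have e2 : q ^ (b-2) = x / (q*q) := by
    rw [show (b-2 : ℤ) = b + -2 by ring, zpow_add₀ hq0, zpow_neg, hq2, div_eq_mul_inv]
  have e3 : q ^ (2*b-1) = x * x / q := by
    rw [show (2*b-1 : ℤ) = b + b + -1 by ring, zpow_add₀ hq0, zpow_add₀ hq0, zpow_neg,
      zpow_one, div_eq_mul_inv]
  have e4 : q ^ (b+3) = x * (q*q*q) := by rw [zpow_add₀ hq0, hq3]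
  -- make `D = q^2 - 1` an opaque atom
  obtain ⟨D, hDdef, hD'⟩ : ∃ D : ℂ, D = q ^ 2 - 1 ∧ D ≠ 0 := ⟨_, rfl, hD⟩
  -- closed forms for all the quantum integers involved
  have E1 : qint q b = (x^2 - 1) * q / (x * D) := by
    rw [hDdef]; simp only [qint, zpow_neg, ← hxdef]
    rw [div_eq_div_iff hd (mul_ne_zero hx hD)]; field_simp
  have E2 : qint q (b+1) = (x^2*q^2 - 1) * q / (x * q * D) := by
    rw [hDdef]; simp only [qint, zpow_neg, eb1]
    rw [div_eq_div_iff hd (mul_ne_zero (mul_ne_zero hx hq0) hD)]; field_simp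
  have E3 : qint q (2*b+1) = (x^4*q^2 - 1) * q / (x^2 * q * D) := by
    rw [hDdef]; simp only [qint, zpow_neg, e2b1]
    rw [div_eq_div_iff hd (mul_ne_zero (mul_ne_zero (pow_ne_zero 2 hx) hq0) hD)]
    field_simp
  have E4 : qint q (2*b+3) = (x^4*q^6 - 1) * q / (x^2 * q^3 * D) := by
    rw [hDdef]; simp only [qint, zpow_neg, e1]
    rw [div_eq_div_iff hd (mul_ne_zero (mul_ne_zero (pow_ne_zero 2 hx) (pow_ne_zero 3 hq0)) hD)]
    field_simp
  have E5 : qint q (b-2) = (x^2 - q^4) * q / (x * q^2 * D) := by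
    rw [hDdef]; simp only [qint, zpow_neg, e2]
    rw [div_eq_div_iff hd (mul_ne_zero (mul_ne_zero hx (pow_ne_zero 2 hq0)) hD)]
    field_simp
  have E6 : qint q (2*b-1) = (x^4 - q^2) * q / (x^2 * q * D) := by
    rw [hDdef]; simp only [qint, zpow_neg, e3]
    rw [div_eq_div_iff hd (mul_ne_zero (mul_ne_zero (pow_ne_zero 2 hx) hq0) hD)]
    field_simp
  have E7 : qint q (b+3) = (x^2*q^6 - 1) * q / (x * q^3 * D) := by
    rw [hDdef]; simp only [qint, zpow_neg, e4]
    rw [div_eq_div_iff hd (mul_ne_zero (mul_ne_zero hx (pow_ne_zero 3 hq0)) hD)]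
    field_simp
  have E8 : qint q 2 = (q^4 - 1) / (q * D) := by
    rw [hDdef]; simp only [qint, zpow_neg, hq2]
    rw [div_eq_div_iff hd (mul_ne_zero hq0 hD)]; field_simp
  have E9 : qint q 3 = (q^6 - 1) / (q^2 * D) := by
    rw [hDdef]; simp only [qint, zpow_neg, hq3]
    rw [div_eq_div_iff hd (mul_ne_zero (pow_ne_zero 2 hq0) hD)]; field_simp
  have hA : x^2 - 1 ≠ 0 := by
    intro h; apply h1; rw [E1, h, zero_mul, zero_div]
  have hB : x^2*q^2 - 1 ≠ 0 := by
    intro h; apply h2; rw [E2, h, zero_mul, zero_div]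
  have hC : x^4*q^2 - 1 ≠ 0 := by
    intro h; apply h3; rw [E3, h, zero_mul, zero_div]
  -- the two compound ratios and the right-hand side as single fractions
  have T2 : qint q (2*b+3) * qint q (b-2) / (qint q (2*b+1) * qint q (b+1))
      = (x^4*q^6 - 1) * (x^2 - q^4) / ((x^4*q^2 - 1) * (x^2*q^2 - 1) * q^3) := by
    rw [div_eq_div_iff (mul_ne_zero h3 h2)
      (mul_ne_zero (mul_ne_zero hC hB) (pow_ne_zero 3 hq0)), E2, E3, E4, E5]
    rw [div_mul_div_comm, div_mul_div_comm, div_mul_eq_mul_div, mul_div_assoc']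
    rw [div_eq_div_iff
      (by simp [hx, hq0, hD', hA, hB, hC, pow_eq_zero_iff, sub_eq_zero])
      (by simp [hx, hq0, hD', hA, hB, hC, pow_eq_zero_iff, sub_eq_zero])]
    ring
  have T3 : qint q (2*b-1) * qint q (b+3) / (qint q (2*b+1) * qint q b)
      = (x^4 - q^2) * (x^2*q^6 - 1) / ((x^4*q^2 - 1) * (x^2 - 1) * q^3) := by
    rw [div_eq_div_iff (mul_ne_zero h3 h1)
      (mul_ne_zero (mul_ne_zero hC hA) (pow_ne_zero 3 hq0)), E1, E3, E6, E7]
    rw [div_mul_div_comm, div_mul_div_comm, div_mul_eq_mul_div, mul_div_assoc']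
    rw [div_eq_div_iff
      (by simp [hx, hq0, hD', hA, hB, hC, pow_eq_zero_iff, sub_eq_zero])
      (by simp [hx, hq0, hD', hA, hB, hC, pow_eq_zero_iff, sub_eq_zero])]
    ring
  have T4 : qint q 3 / (qint q b * qint q (b+1))
      = (q^6 - 1) * x^2 * D / ((x^2 - 1) * (x^2*q^2 - 1) * q^3) := by
    rw [div_eq_div_iff (mul_ne_zero h1 h2)
      (mul_ne_zero (mul_ne_zero hA hB) (pow_ne_zero 3 hq0)), E1, E2, E9]
    rw [div_mul_div_comm, div_mul_eq_mul_div, mul_div_assoc']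
    rw [div_eq_div_iff
      (by simp [hx, hq0, hD', hA, hB, hC, pow_eq_zero_iff, sub_eq_zero])
      (by simp [hx, hq0, hD', hA, hB, hC, pow_eq_zero_iff, sub_eq_zero])]
    ring
  rw [T2, T3, T4, E8]
  rw [div_sub_div _ _ (mul_ne_zero hq0 hD')
      (by simp [hx, hq0, hD', hA, hB, hC, pow_eq_zero_iff, sub_eq_zero] : (x^4*q^2 - 1) * (x^2*q^2 - 1) * q^3 ≠ 0),
    div_sub_div _ _
      (by simp [hx, hq0, hD', hA, hB, hC, pow_eq_zero_iff, sub_eq_zero])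
      (by simp [hx, hq0, hD', hA, hB, hC, pow_eq_zero_iff, sub_eq_zero] : (x^4*q^2 - 1) * (x^2 - 1) * q^3 ≠ 0),
    div_eq_div_iff
      (by simp [hx, hq0, hD', hA, hB, hC, pow_eq_zero_iff, sub_eq_zero])
      (by simp [hx, hq0, hD', hA, hB, hC, pow_eq_zero_iff, sub_eq_zero] : (x^2 - 1) * (x^2*q^2 - 1) * q^3 ≠ 0)]
  rw [hDdef]
  ring
end

section
/- Let q be a nonzero complex number with q² ≠ 1. Then for every integer b ≥ 2: [2]_q [2b+1]_q · ( Σ_{j=1}^{b} [2j]_q ) − [2b+3]_q · ( Σ_{j=1}^{b−2} [2j+1]_q ) − [2b−1]_q · ( Σ_{j=1}^{b+1} [2j+1]_q ) = [3]_q [2b+1]_q. (With a = 2b+1 this is the evaluation of the numerator [2][a]([2]+[4]+⋯+[a−1]) − [a+2]([3]+[5]+⋯+[a−4]) − [a−2]([3]+[5]+⋯+[a+2]) = [3][a] used in comparing the 𝒜^((2n+1)*) Hecke weights with the Behrend–Evans Boltzmann weights.) -/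
lemma h21 (q : ℂ) (hq1 : q ^ 2 ≠ 1) : q ^ 2 - 1 ≠ 0 := sub_ne_zero.mpr hq1

lemma qint_eq (q : ℂ) (hq0 : q ≠ 0) (m : ℤ) :
    qint q m = (q ^ m - q ^ (-m)) * q / (q ^ 2 - 1) := by
  unfold qint
  rw [show q - q⁻¹ = (q^2 - 1)/q by field_simp]
  rw [div_div_eq_mul_div]

lemma qint_eq2 (q : ℂ) (hq0 : q ≠ 0) (hq1 : q ^ 2 ≠ 1) (m : ℤ) :
    qint q m = (q ^ m * q ^ m - 1) * q / ((q ^ 2 - 1) * q ^ m) := by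
  have h2 := h21 q hq1
  have hm : q ^ m ≠ 0 := zpow_ne_zero m hq0
  rw [qint_eq q hq0, zpow_neg, div_eq_div_iff h2 (mul_ne_zero h2 hm)]
  field_simp

lemma sum_even (q : ℂ) (hq0 : q ≠ 0) (hq1 : q ^ 2 ≠ 1) (n : ℕ) :
    (∑ j ∈ Finset.Icc 1 n, qint q (2*j)) = qint q n * qint q (n+1) := by
  have h2 := h21 q hq1
  induction n with
  | zero => simp [qint]
  | succ n ih =>
      rw [Finset.sum_Icc_succ_top (by omega), ih]
      simp only [qint_eq2 q hq0 hq1, Nat.cast_succ]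
      set N := (n : ℤ) with hN
      set x := q ^ N with hxdef
      have hx : x ≠ 0 := zpow_ne_zero N hq0
      clear_value x
      have h0 : q ^ N = x := hxdef.symm
      have hA : q ^ (N+1) = x * q := by rw [zpow_add₀ hq0, zpow_one, h0]
      have hB : q ^ (N+1+1) = x * q * q := by rw [zpow_add₀ hq0, zpow_one, hA]
      have hC : q ^ (2*(N+1)) = x * q * (x * q) := by
        rw [show 2*(N+1) = (N+1)+(N+1) by ring, zpow_add₀ hq0, hA]
      simp only [h0, hA, hB, hC]
      rw [div_mul_div_comm,
          div_add_div _ _ (by apply_rules [mul_ne_zero, hq0, h2, hx]) (by apply_rules [mul_ne_zero, hq0, h2, hx]),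
          div_mul_div_comm,
          div_eq_div_iff (by apply_rules [mul_ne_zero, hq0, h2, hx]) (by apply_rules [mul_ne_zero, hq0, h2, hx])]
      ring

lemma sum_odd (q : ℂ) (hq0 : q ≠ 0) (hq1 : q ^ 2 ≠ 1) (n : ℕ) :
    (∑ j ∈ Finset.Icc 1 n, qint q (2*j+1)) = qint q (n+1) ^ 2 - 1 := by
  have h2 := h21 q hq1
  induction n with
  | zero =>
      rw [Finset.Icc_eq_empty (by omega), Finset.sum_empty]
      simp only [Nat.cast_zero, zero_add, qint_eq2 q hq0 hq1]
      rw [zpow_one, div_pow,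
          div_sub_one (by apply_rules [pow_ne_zero, mul_ne_zero, hq0, h2]),
          eq_comm, div_eq_zero_iff]
      left
      ring
  | succ n ih =>
      rw [Finset.sum_Icc_succ_top (by omega), ih]
      simp only [qint_eq2 q hq0 hq1, Nat.cast_succ]
      set N := (n : ℤ) with hN
      set x := q ^ N with hxdef
      have hx : x ≠ 0 := zpow_ne_zero N hq0
      clear_value x
      have h0 : q ^ N = x := hxdef.symm
      have hA : q ^ (N+1) = x * q := by rw [zpow_add₀ hq0, zpow_one, h0]
      have hB : q ^ (N+1+1) = x * q * q := by rw [zpow_add₀ hq0, zpow_one, hA]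
      have hC : q ^ (2*(N+1)+1) = x * q * (x * q) * q := by
        rw [show 2*(N+1)+1 = (N+1)+(N+1)+1 by ring, zpow_add₀ hq0, zpow_add₀ hq0, hA, zpow_one]
      simp only [h0, hA, hB, hC]
      rw [div_pow, div_pow,
          div_sub_one (by apply_rules [pow_ne_zero, mul_ne_zero, hq0, h2, hx]),
          div_sub_one (by apply_rules [pow_ne_zero, mul_ne_zero, hq0, h2, hx]),
          div_add_div _ _ (by apply_rules [pow_ne_zero, mul_ne_zero, hq0, h2, hx])
            (by apply_rules [mul_ne_zero, hq0, h2, hx]),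
          div_eq_div_iff (by apply_rules [pow_ne_zero, mul_ne_zero, hq0, h2, hx])
            (by apply_rules [pow_ne_zero, mul_ne_zero, hq0, h2, hx])]
      ring

/-- For `q ≠ 0` with `q² ≠ 1` and every integer `b ≥ 2`:
`[2][2b+1](Σ_{j=1}^{b}[2j]) − [2b+3](Σ_{j=1}^{b−2}[2j+1]) − [2b−1](Σ_{j=1}^{b+1}[2j+1])
  = [3][2b+1]`. -/
theorem Astar_numerator_identity (q : ℂ) (hq0 : q ≠ 0) (hq1 : q ^ 2 ≠ 1)
    (b : ℕ) (hb : 2 ≤ b) :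
    qint q 2 * qint q (2*b + 1) * (∑ j ∈ Finset.Icc 1 b, qint q (2*j))
      - qint q (2*b + 3) * (∑ j ∈ Finset.Icc 1 (b - 2), qint q (2*j + 1))
      - qint q (2*b - 1) * (∑ j ∈ Finset.Icc 1 (b + 1), qint q (2*j + 1))
      = qint q 3 * qint q (2*b + 1) := by
  rw [sum_even q hq0 hq1, sum_odd q hq0 hq1, sum_odd q hq0 hq1]
  have h2 := h21 q hq1
  have hc2 : ((b - 2 : ℕ) : ℤ) = (b:ℤ) - 2 := by omega
  have hc1 : ((b + 1 : ℕ) : ℤ) = (b:ℤ) + 1 := by push_cast; ring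
  rw [hc2, hc1]
  set B := (b : ℤ) with hB
  rw [show ((B:ℤ) - 2 + 1) = B - 1 by ring]
  set x := q ^ B with hxdef
  have hx : x ≠ 0 := zpow_ne_zero B hq0
  clear_value x
  have h0 : q ^ B = x := hxdef.symm
  have e1 : q ^ (B+1) = x * q := by rw [zpow_add₀ hq0, zpow_one, h0]
  have e2 : q ^ (B+1+1) = x * q * q := by rw [zpow_add₀ hq0, zpow_one, e1]
  have e3 : q ^ (B-1) = x / q := by rw [zpow_sub₀ hq0, zpow_one, h0]
  have e4 : q ^ (2*B+1) = x * x * q := by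
    rw [show 2*B+1 = B + B + 1 by ring, zpow_add₀ hq0, zpow_add₀ hq0, zpow_one, h0]
  have e5 : q ^ (2*B+3) = x * x * q * q * q := by
    rw [show 2*B+3 = B + B + 1 + 1 + 1 by ring, zpow_add₀ hq0, zpow_add₀ hq0,
        zpow_add₀ hq0, zpow_add₀ hq0, zpow_one, h0]
  have e6 : q ^ (2*B-1) = x * x / q := by
    rw [show 2*B-1 = B + B - 1 by ring, zpow_sub₀ hq0, zpow_add₀ hq0, zpow_one, h0]
  have e7 : q ^ (2:ℤ) = q * q := by rw [show (2:ℤ) = 1+1 by norm_num, zpow_add₀ hq0, zpow_one]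
  have e8 : q ^ (3:ℤ) = q * q * q := by rw [show (3:ℤ) = 1+1+1 by norm_num, zpow_add₀ hq0, zpow_add₀ hq0, zpow_one]
  have E3 : qint q (B-1) = (x * x - q * q) * q / ((q^2-1) * (x * q)) := by
    rw [qint_eq2 q hq0 hq1, e3,
        div_eq_div_iff (mul_ne_zero h2 (div_ne_zero hx hq0))
          (mul_ne_zero h2 (mul_ne_zero hx hq0))]
    field_simp
  have E6 : qint q (2*B-1) = (x * x * (x * x) - q * q) * q / ((q^2-1) * (x * x * q)) := by
    rw [qint_eq2 q hq0 hq1, e6,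
        div_eq_div_iff (mul_ne_zero h2 (div_ne_zero (mul_ne_zero hx hx) hq0))
          (mul_ne_zero h2 (mul_ne_zero (mul_ne_zero hx hx) hq0))]
    field_simp
  rw [E3, E6]
  simp only [qint_eq2 q hq0 hq1]
  simp only [h0, e1, e2, e4, e5, e7, e8]
  rw [div_pow, div_pow,
      div_sub_one (by apply_rules [pow_ne_zero, mul_ne_zero, hq0, h2, hx]),
      div_sub_one (by apply_rules [pow_ne_zero, mul_ne_zero, hq0, h2, hx])]
  simp only [div_mul_div_comm]
  have hd1 : (q ^ 2 - 1) * (q * q) * ((q ^ 2 - 1) * (x * x * q)) *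
      ((q ^ 2 - 1) * x * ((q ^ 2 - 1) * (x * q))) ≠ 0 := by
    apply_rules [mul_ne_zero, hq0, h2, hx]
  have hd2 : (q ^ 2 - 1) * (x * x * q * q * q) * ((q ^ 2 - 1) * (x * q)) ^ 2 ≠ 0 := by
    apply_rules [pow_ne_zero, mul_ne_zero, hq0, h2, hx]
  have hd3 : (q ^ 2 - 1) * (x * x * q) * ((q ^ 2 - 1) * (x * q * q)) ^ 2 ≠ 0 := by
    apply_rules [pow_ne_zero, mul_ne_zero, hq0, h2, hx]
  have hd4 : (q ^ 2 - 1) * (q * q * q) * ((q ^ 2 - 1) * (x * x * q)) ≠ 0 := by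
    apply_rules [mul_ne_zero, hq0, h2, hx]
  rw [div_sub_div _ _ hd1 hd2, div_sub_div _ _ (mul_ne_zero hd1 hd2) hd3,
      div_eq_div_iff (mul_ne_zero (mul_ne_zero hd1 hd2) hd3) hd4]
  ring
end

section
/- Let q = exp(iπ/8). Then the squared moduli of the Ocneanu cells of the exceptional graph ℰ⁽⁸⁾, namely |W_{i_l, j_l, j_{l−1}}|² = [2][3], |W_{j_{l+1}, j_l, j_{l−1}}|² = [2]²[3]/[4], and |W_{j_l, j_{l+2}, j_{l+4}}|² = [2]²[3]²/[4] (quantum integers at q), satisfy the type I frame equations: (a) [2][3] + [2]²[3]/[4] + [2]²[3]/[4] = [2][3]² (frame at an edge j_l → j_{l−1}, whose three triangles pass through i_l, j_{l+1} and j_{l−2}); and (b) [2]²[3]/[4] + [2]²[3]²/[4] = [2][3]² (frame at an edge j_l → j_{l+2}). -/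
/-- The squared moduli of the Ocneanu cells of the exceptional graph `ℰ⁽⁸⁾`, at
`q = exp(iπ/8)`, satisfy the type I frame equations:
(a) `[2][3] + [2]²[3]/[4] + [2]²[3]/[4] = [2][3]²` (frame at an edge `j_l → j_{l−1}`);
(b) `[2]²[3]/[4] + [2]²[3]²/[4] = [2][3]²` (frame at an edge `j_l → j_{l+2}`). -/
theorem E8_cells_typeI_frames :
    (qi 8 2 * qi 8 3 + qi 8 2 ^ 2 * qi 8 3 / qi 8 4 + qi 8 2 ^ 2 * qi 8 3 / qi 8 4
      = qi 8 2 * qi 8 3 ^ 2) ∧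
    (qi 8 2 ^ 2 * qi 8 3 / qi 8 4 + qi 8 2 ^ 2 * qi 8 3 ^ 2 / qi 8 4
      = qi 8 2 * qi 8 3 ^ 2) := by
  have hπ := Real.pi_pos
  have hr2 : Real.sqrt 2 ^ 2 = 2 := Real.sq_sqrt (by norm_num)
  have hr2pos : 0 < Real.sqrt 2 := Real.sqrt_pos.2 (by norm_num)
  have hs : Real.sin (Real.pi / 8) > 0 :=
    Real.sin_pos_of_pos_of_lt_pi (by positivity) (by nlinarith)
  have hcpos : Real.cos (Real.pi / 8) > 0 :=
    Real.cos_pos_of_mem_Ioo ⟨by nlinarith, by nlinarith⟩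
  have hsc : 2 * Real.sin (Real.pi / 8) * Real.cos (Real.pi / 8) = Real.sqrt 2 / 2 := by
    have := Real.sin_two_mul (Real.pi / 8)
    rw [show 2 * (Real.pi / 8) = Real.pi / 4 by ring, Real.sin_pi_div_four] at this
    linarith
  have hcs : Real.cos (Real.pi / 8) ^ 2 - Real.sin (Real.pi / 8) ^ 2 = Real.sqrt 2 / 2 := by
    have h := Real.cos_two_mul (Real.pi / 8)
    have h' := Real.sin_sq_add_cos_sq (Real.pi / 8)
    rw [show 2 * (Real.pi / 8) = Real.pi / 4 by ring, Real.cos_pi_div_four] at h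
    nlinarith
  set s := Real.sin (Real.pi / 8) with hsdef
  set c := Real.cos (Real.pi / 8) with hcdef
  have hsq : (c - s) ^ 2 = 2 * s ^ 2 := by nlinarith
  have hdiff : c - s > 0 := by nlinarith
  have hc : c = s + Real.sqrt 2 * s := by nlinarith [mul_pos hr2pos hs]
  have h2 : Real.sin ((2 : ℝ) * Real.pi / 8) = Real.sqrt 2 / 2 := by
    rw [show (2 : ℝ) * Real.pi / 8 = Real.pi / 4 by ring, Real.sin_pi_div_four]
  have h3 : Real.sin ((3 : ℝ) * Real.pi / 8) = s + Real.sqrt 2 * s := by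
    rw [show (3 : ℝ) * Real.pi / 8 = Real.pi / 2 - Real.pi / 8 by ring,
      Real.sin_pi_div_two_sub, ← hcdef, hc]
  have h4 : Real.sin ((4 : ℝ) * Real.pi / 8) = 1 := by
    rw [show (4 : ℝ) * Real.pi / 8 = Real.pi / 2 by ring, Real.sin_pi_div_two]
  clear_value s c
  unfold qi
  push_cast
  rw [h2, h3, h4, ← hsdef]
  have hs' : s ≠ 0 := ne_of_gt hs
  constructor
  · field_simp
    ring_nf
  · field_simp
    ring_nf
    linear_combination (1 : ℝ) * hr2
end

section
/- Let q = exp(iπ/24) and set (all quantum integers at q): a = [4][5][7], b = [3]²[5][9]/[2], c = [5]²[7]/[2], d = [3][5][9]/[2], e = [3]²[5]²/[2], f = [5][7][10], g = [5]²[9]/[2], h = [7][9]/[2], t = [3][4]²[5]/[2]. Then the following six equations hold, which are the frame equations (for the squared cell moduli |W_{4,11,19}|² = a, |W_{4,12,19}|² = b, |W_{4,14,19}|² = c, |W_{3,12,19}|² = d, |W_{3,14,19}|² = e, |W_{5,14,19}|² = f, |W_{3,12,21}|² = g, |W_{4,12,21}|² = h, |W_{3,10,19}|² = t) of the exceptional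 graph ℰ⁽²⁴⁾: (i) a + b + c = [3][4][5][7]; (ii) d + b = [2][3][5][9]; (iii) t + d + e = [3][4][5]²; (iv) e + c + f = [2][3]²[5]²; (v) d + g = [4][5][9]; (vi) g + h = [2][9]². -/
lemma sin1_pos : 0 < Real.sin (Real.pi / 24) := by
  apply Real.sin_pos_of_pos_of_lt_pi
  · positivity
  · nlinarith [Real.pi_pos]

lemma sin1_ne : Real.sin (Real.pi / 24) ≠ 0 := ne_of_gt sin1_pos

lemma sin2_pos : 0 < Real.sin (2 * (Real.pi / 24)) := by
  apply Real.sin_pos_of_pos_of_lt_pi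
  · positivity
  · nlinarith [Real.pi_pos]

/-- The fundamental recurrence `[2][m] = [m-1] + [m+1]`. -/
lemma rec24 (m : ℤ) : qi 24 2 * qi 24 m = qi 24 (m - 1) + qi 24 (m + 1) := by
  unfold qi
  have e1 : ((2 : ℤ) : ℝ) * Real.pi / ((24 : ℕ) : ℝ) = 2 * (Real.pi / 24) := by push_cast; ring
  have e2 : ((m - 1 : ℤ) : ℝ) * Real.pi / ((24 : ℕ) : ℝ) =
      (m : ℝ) * Real.pi / 24 - Real.pi / 24 := by push_cast; ring
  have e3 : ((m + 1 : ℤ) : ℝ) * Real.pi / ((24 : ℕ) : ℝ) =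
      (m : ℝ) * Real.pi / 24 + Real.pi / 24 := by push_cast; ring
  have e4 : (m : ℝ) * Real.pi / ((24 : ℕ) : ℝ) = (m : ℝ) * Real.pi / 24 := by push_cast; ring
  have e5 : Real.pi / ((24 : ℕ) : ℝ) = Real.pi / 24 := by norm_num
  rw [e1, e2, e3, e4, e5, Real.sin_two_mul, Real.sin_add, Real.sin_sub]
  field_simp [sin1_ne]
  ring

/-- `[1] = 1`. -/
lemma qi_one_s14 : qi 24 1 = 1 := by
  unfold qi
  rw [Int.cast_one, one_mul]
  exact div_self (by rw [show Real.pi / ((24 : ℕ) : ℝ) = Real.pi / 24 by norm_num]; exact sin1_ne)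

/-- `[13] = [11]`. -/
lemma qi13 : qi 24 13 = qi 24 11 := by
  unfold qi
  rw [show ((13 : ℤ) : ℝ) * Real.pi / ((24 : ℕ) : ℝ) =
        Real.pi - ((11 : ℤ) : ℝ) * Real.pi / ((24 : ℕ) : ℝ) by push_cast; ring,
      Real.sin_pi_sub]

/-- `2[4] = [12]`, since `2 sin(π/6) = 1 = sin(π/2)`. -/
lemma qi_R : 2 * qi 24 4 = qi 24 12 := by
  unfold qi
  rw [show ((4 : ℤ) : ℝ) * Real.pi / ((24 : ℕ) : ℝ) = Real.pi / 6 by push_cast; ring,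
      show ((12 : ℤ) : ℝ) * Real.pi / ((24 : ℕ) : ℝ) = Real.pi / 2 by push_cast; ring,
      Real.sin_pi_div_six, Real.sin_pi_div_two]
  ring

lemma qi2_ne : qi 24 2 ≠ 0 := by
  unfold qi
  rw [show ((2 : ℤ) : ℝ) * Real.pi / ((24 : ℕ) : ℝ) = 2 * (Real.pi / 24) by push_cast; ring,
      show Real.pi / ((24 : ℕ) : ℝ) = Real.pi / 24 by norm_num]
  exact ne_of_gt (div_pos sin2_pos sin1_pos)

set_option maxHeartbeats 2000000 in
/-- The squared moduli of the Ocneanu cells of the exceptional graph `ℰ⁽²⁴⁾`, at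
`q = exp(iπ/24)`, satisfy the type I and type II frame equations (i)–(vi). -/
theorem E24_cells_frames :
    let a := qi 24 4 * qi 24 5 * qi 24 7
    let b := qi 24 3 ^ 2 * qi 24 5 * qi 24 9 / qi 24 2
    let c := qi 24 5 ^ 2 * qi 24 7 / qi 24 2
    let d := qi 24 3 * qi 24 5 * qi 24 9 / qi 24 2
    let e := qi 24 3 ^ 2 * qi 24 5 ^ 2 / qi 24 2
    let f := qi 24 5 * qi 24 7 * qi 24 10
    let g := qi 24 5 ^ 2 * qi 24 9 / qi 24 2
    let h := qi 24 7 * qi 24 9 / qi 24 2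
    let t := qi 24 3 * qi 24 4 ^ 2 * qi 24 5 / qi 24 2
    (a + b + c = qi 24 3 * qi 24 4 * qi 24 5 * qi 24 7) ∧
    (d + b = qi 24 2 * qi 24 3 * qi 24 5 * qi 24 9) ∧
    (t + d + e = qi 24 3 * qi 24 4 * qi 24 5 ^ 2) ∧
    (e + c + f = qi 24 2 * qi 24 3 ^ 2 * qi 24 5 ^ 2) ∧
    (d + g = qi 24 4 * qi 24 5 * qi 24 9) ∧
    (g + h = qi 24 2 * qi 24 9 ^ 2) := by
  have hq2 : qi 24 2 ≠ 0 := qi2_ne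
  have h1 : qi 24 1 = 1 := qi_one_s14
  have hR : 2 * qi 24 4 = qi 24 12 := qi_R
  have h2 : qi 24 2 * qi 24 2 = qi 24 1 + qi 24 3 := by
    have := rec24 2; norm_num at this; exact this
  have h3 : qi 24 2 * qi 24 3 = qi 24 2 + qi 24 4 := by
    have := rec24 3; norm_num at this; exact this
  have h4 : qi 24 2 * qi 24 4 = qi 24 3 + qi 24 5 := by
    have := rec24 4; norm_num at this; exact this
  have h5 : qi 24 2 * qi 24 5 = qi 24 4 + qi 24 6 := by
    have := rec24 5; norm_num at this; exact this
  have h6 : qi 24 2 * qi 24 6 = qi 24 5 + qi 24 7 := by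
    have := rec24 6; norm_num at this; exact this
  have h7 : qi 24 2 * qi 24 7 = qi 24 6 + qi 24 8 := by
    have := rec24 7; norm_num at this; exact this
  have h8 : qi 24 2 * qi 24 8 = qi 24 7 + qi 24 9 := by
    have := rec24 8; norm_num at this; exact this
  have h9 : qi 24 2 * qi 24 9 = qi 24 8 + qi 24 10 := by
    have := rec24 9; norm_num at this; exact this
  have h10 : qi 24 2 * qi 24 10 = qi 24 9 + qi 24 11 := by
    have := rec24 10; norm_num at this; exact this
  have h11 : qi 24 2 * qi 24 11 = qi 24 10 + qi 24 12 := by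
    have := rec24 11; norm_num at this; exact this
  have h12 : qi 24 2 * qi 24 12 = 2 * qi 24 11 := by
    have := rec24 12; rw [show (12:ℤ) - 1 = 11 by norm_num, show (12:ℤ) + 1 = 13 by norm_num, qi13] at this
    linarith
  dsimp only
  refine ⟨?_, ?_, ?_, ?_, ?_, ?_⟩
  · rw [add_assoc, ← add_div, add_div' _ _ _ hq2, div_eq_iff hq2]
    linear_combination ((-7) * qi 24 2 ^ 4 + 17 * qi 24 2 ^ 6 + (-13) * qi 24 2 ^ 8 + 3 * qi 24 2 ^ 10 + qi 24 1 * qi 24 2 ^ 2 + 2 * qi 24 1 * qi 24 2 ^ 4 + (-13) * qi 24 1 * qi 24 2 ^ 6 + 12 * qi 24 1 * qi 24 2 ^ 8 + (-3) * qi 24 1 * qi 24 2 ^ 10 + (-7) * qi 24 1 ^ 2 * qi 24 2 ^ 2 + 25 * qi 24 1 ^ 2 * qi 24 2 ^ 4 + (-21) * qi 24 1 ^ 2 * qi 24 2 ^ 6 + 5 * qi 24 1 ^ 2 * qi 24 2 ^ 8 + qi 24 1 ^ 3 + (-6) * qi 24 1 ^ 3 * qi 24 2 ^ 2 + 7 *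 qi 24 1 ^ 3 * qi 24 2 ^ 4 + (-2) * qi 24 1 ^ 3 * qi 24 2 ^ 6) * h1 +
        ((-1) * qi 24 2 ^ 2 + 3 * qi 24 2 ^ 4 + (-1) * qi 24 2 ^ 6) * h10 +
        ((-1) * qi 24 2 ^ 3 + 3 * qi 24 2 ^ 5 + (-1) * qi 24 2 ^ 7) * h11 +
        ((1/2 : ℝ) * qi 24 2 ^ 2 + (-2) * qi 24 2 ^ 4 + 2 * qi 24 2 ^ 6 + (-1/2 : ℝ) * qi 24 2 ^ 8) * h12 +
        ((-1) * qi 24 3 ^ 2 + (-1) * qi 24 3 ^ 3 + (-1) * qi 24 2 ^ 2 + (-6) * qi 24 2 ^ 2 * qi 24 3 + 2 * qi 24 2 ^ 2 * qi 24 3 ^ 2 + 6 * qi 24 2 ^ 2 * qi 24 3 ^ 3 + (-2) * qi 24 2 ^ 4 + 22 * qi 24 2 ^ 4 * qi 24 3 + (-7) * qi 24 2 ^ 4 * qi 24 3 ^ 3 + 7 * qi 24 2 ^ 6 + (-26) * qi 24 2 ^ 6 * qi 24 3 + 2 * qi 24 2 ^ 6 * qi 24 3 ^ 2 + 2 * qi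 24 2 ^ 6 * qi 24 3 ^ 3 + (-5) * qi 24 2 ^ 8 + 10 * qi 24 2 ^ 8 * qi 24 3 + (-1) * qi 24 2 ^ 8 * qi 24 3 ^ 2 + qi 24 2 ^ 10 + (-1) * qi 24 2 ^ 10 * qi 24 3 + qi 24 1 * qi 24 3 + qi 24 1 * qi 24 3 ^ 2 + 7 * qi 24 1 * qi 24 2 ^ 2 + (-1) * qi 24 1 * qi 24 2 ^ 2 * qi 24 3 + (-6) * qi 24 1 * qi 24 2 ^ 2 * qi 24 3 ^ 2 + (-23) * qi 24 1 * qi 24 2 ^ 4 + (-6) * qi 24 1 * qi 24 2 ^ 4 * qi 24 3 + 7 * qi 24 1 * qi 24 2 ^ 4 * qi 24 3 ^ 2 + 20 * qi 24 1 * qi 24 2 ^ 6 + 5 * qi 24 1 * qi 24 2 ^ 6 * qi 24 3 + (-2) * qi 24 1 * qi 24 2 ^ 6 * qi 24 3 ^ 2 + (-5) * qi 24 1 * qi 24 2 ^ 8 + (-1) * qi 24 1 * qi 24 2 ^ 8 * qi 24 3 + (-1) * qi 24 1 ^ 2 + (-1) * qi 24 1 ^ 2 * qi 24 3 + 6 *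 qi 24 1 ^ 2 * qi 24 2 ^ 2 * qi 24 3 + 12 * qi 24 1 ^ 2 * qi 24 2 ^ 4 + (-7) * qi 24 1 ^ 2 * qi 24 2 ^ 4 * qi 24 3 + (-12) * qi 24 1 ^ 2 * qi 24 2 ^ 6 + 2 * qi 24 1 ^ 2 * qi 24 2 ^ 6 * qi 24 3 + 3 * qi 24 1 ^ 2 * qi 24 2 ^ 8 + qi 24 1 ^ 3 + (-6) * qi 24 1 ^ 3 * qi 24 2 ^ 2 + 7 * qi 24 1 ^ 3 * qi 24 2 ^ 4 + (-2) * qi 24 1 ^ 3 * qi 24 2 ^ 6) * h2 +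
        (5 * qi 24 2 * qi 24 3 ^ 2 + 3 * qi 24 2 * qi 24 3 ^ 3 + (-8) * qi 24 2 ^ 2 * qi 24 3 * qi 24 4 + 6 * qi 24 2 ^ 3 + 4 * qi 24 2 ^ 3 * qi 24 4 ^ 2 + 8 * qi 24 2 ^ 3 * qi 24 3 + (-2) * qi 24 2 ^ 3 * qi 24 3 * qi 24 4 ^ 2 + (-12) * qi 24 2 ^ 3 * qi 24 3 ^ 2 + (-6) * qi 24 2 ^ 3 * qi 24 3 ^ 3 + (-4) * qi 24 2 ^ 4 * qi 24 4 + 11 * qi 24 2 ^ 4 * qi 24 3 * qi 24 4 + (-19) * qi 24 2 ^ 5 + (-2) * qi 24 2 ^ 5 * qi 24 4 ^ 2 + (-15) * qi 24 2 ^ 5 * qi 24 3 + qi 24 2 ^ 5 * qi 24 3 * qi 24 4 ^ 2 + 11 * qi 24 2 ^ 5 * qi 24 3 ^ 2 + 2 * qi 24 2 ^ 5 * qi 24 3 ^ 3 + 2 * qi 24 2 ^ 6 * qi 24 4 + (-3) * qi 24 2 ^ 6 * qi 24 3 * qi 24 4 + 20 * qi 24 2 ^ 7 + 5 * qi 24 2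 ^ 7 * qi 24 3 + (-3) * qi 24 2 ^ 7 * qi 24 3 ^ 2 + (-8) * qi 24 2 ^ 9 + qi 24 2 ^ 11) * h3 +
        (qi 24 5 ^ 2 + (-1) * qi 24 3 * qi 24 5 + qi 24 3 ^ 2 + (-1) * qi 24 3 ^ 2 * qi 24 5 + qi 24 3 ^ 3 + 3 * qi 24 2 * qi 24 4 * qi 24 5 + (-4) * qi 24 2 * qi 24 3 * qi 24 4 + (-1) * qi 24 2 * qi 24 3 * qi 24 4 * qi 24 5 + (-2) * qi 24 2 * qi 24 3 ^ 2 * qi 24 4 + qi 24 2 ^ 2 + (-1) * qi 24 2 ^ 2 * qi 24 5 ^ 2 + 4 * qi 24 2 ^ 2 * qi 24 4 ^ 2 + qi 24 2 ^ 2 * qi 24 3 * qi 24 5 + (-2) * qi 24 2 ^ 2 * qi 24 3 * qi 24 4 ^ 2 + (-1) * qi 24 2 ^ 2 * qi 24 3 ^ 2 + 3 * qi 24 2 ^ 2 * qi 24 3 ^ 2 * qi 24 5 + (-3) * qi 24 2 ^ 2 * qi 24 3 ^ 3 + (-2) * qi 24 2 ^ 3 * qi 24 4 * qi 24 5 + 3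 * qi 24 2 ^ 3 * qi 24 3 * qi 24 4 + qi 24 2 ^ 3 * qi 24 3 * qi 24 4 * qi 24 5 + 3 * qi 24 2 ^ 3 * qi 24 3 ^ 2 * qi 24 4 + (-6) * qi 24 2 ^ 4 + (-2) * qi 24 2 ^ 4 * qi 24 4 ^ 2 + qi 24 2 ^ 4 * qi 24 3 * qi 24 4 ^ 2 + (-1) * qi 24 2 ^ 4 * qi 24 3 ^ 2 * qi 24 5 + qi 24 2 ^ 4 * qi 24 3 ^ 3 + (-1) * qi 24 2 ^ 5 * qi 24 3 ^ 2 * qi 24 4 + 11 * qi 24 2 ^ 6 + (-6) * qi 24 2 ^ 8 + qi 24 2 ^ 10) * h4 +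
        ((-1) * qi 24 2 * qi 24 5 ^ 2 + 2 * qi 24 2 * qi 24 3 ^ 2 * qi 24 5 + (-1) * qi 24 2 ^ 2 * qi 24 4 * qi 24 5 + qi 24 2 ^ 2 * qi 24 3 * qi 24 4 * qi 24 5 + (-2) * qi 24 2 ^ 3 + (-1) * qi 24 2 ^ 3 * qi 24 3 ^ 2 * qi 24 5 + 7 * qi 24 2 ^ 5 + (-5) * qi 24 2 ^ 7 + qi 24 2 ^ 9) * h5 +
        ((-1) * qi 24 5 ^ 2 + qi 24 3 ^ 2 * qi 24 5 + (-1) * qi 24 2 * qi 24 4 * qi 24 5 + qi 24 2 * qi 24 3 * qi 24 4 * qi 24 5 + (-1) * qi 24 2 ^ 2 + (-1) * qi 24 2 ^ 2 * qi 24 3 ^ 2 * qi 24 5 + 4 * qi 24 2 ^ 4 + (-4) * qi 24 2 ^ 6 + qi 24 2 ^ 8) * h6 +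
        ((-1) * qi 24 2 * qi 24 3 ^ 2 * qi 24 5 + qi 24 2 ^ 3 + (-3) * qi 24 2 ^ 5 + qi 24 2 ^ 7) * h7 +
        ((-1) * qi 24 3 ^ 2 * qi 24 5 + qi 24 2 ^ 2 + (-3) * qi 24 2 ^ 4 + qi 24 2 ^ 6) * h8 +
        ((3/2 : ℝ) * qi 24 2 ^ 3 + (-5) * qi 24 2 ^ 5 + 3 * qi 24 2 ^ 7 + (-1/2 : ℝ) * qi 24 2 ^ 9) * hR
  · rw [← add_div, div_eq_iff hq2]
    linear_combination ((-8) * qi 24 2 ^ 6 + 24 * qi 24 2 ^ 8 + (-22) * qi 24 2 ^ 10 + 8 * qi 24 2 ^ 12 + (-1) * qi 24 2 ^ 14 + 14 * qi 24 1 * qi 24 2 ^ 4 + (-51) * qi 24 1 * qi 24 2 ^ 6 + 54 * qi 24 1 * qi 24 2 ^ 8 + (-22) * qi 24 1 * qi 24 2 ^ 10 + 3 * qi 24 1 * qi 24 2 ^ 12 + (-7) * qi 24 1 ^ 2 * qi 24 2 ^ 2 + 34 * qi 24 1 ^ 2 * qi 24 2 ^ 4 + (-43) * qi 24 1 ^ 2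 * qi 24 2 ^ 6 + 20 * qi 24 1 ^ 2 * qi 24 2 ^ 8 + (-3) * qi 24 1 ^ 2 * qi 24 2 ^ 10 + qi 24 1 ^ 3 + (-7) * qi 24 1 ^ 3 * qi 24 2 ^ 2 + 11 * qi 24 1 ^ 3 * qi 24 2 ^ 4 + (-6) * qi 24 1 ^ 3 * qi 24 2 ^ 6 + qi 24 1 ^ 3 * qi 24 2 ^ 8) * h1 +
        ((-1) * qi 24 3 ^ 2 + (-1) * qi 24 3 ^ 3 + (-5) * qi 24 2 ^ 2 * qi 24 3 + 3 * qi 24 2 ^ 2 * qi 24 3 ^ 2 + 7 * qi 24 2 ^ 2 * qi 24 3 ^ 3 + (-8) * qi 24 2 ^ 4 + 17 * qi 24 2 ^ 4 * qi 24 3 + 2 * qi 24 2 ^ 4 * qi 24 3 ^ 2 + (-11) * qi 24 2 ^ 4 * qi 24 3 ^ 3 + 24 * qi 24 2 ^ 6 + (-17) * qi 24 2 ^ 6 * qi 24 3 + (-4) * qi 24 2 ^ 6 * qi 24 3 ^ 2 + 6 * qi 24 2 ^ 6 * qi 24 3 ^ 3 + (-22) * qi 24 2 ^ 8 + 7 *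 qi 24 2 ^ 8 * qi 24 3 + qi 24 2 ^ 8 * qi 24 3 ^ 2 + (-1) * qi 24 2 ^ 8 * qi 24 3 ^ 3 + 8 * qi 24 2 ^ 10 + (-1) * qi 24 2 ^ 10 * qi 24 3 + (-1) * qi 24 2 ^ 12 + qi 24 1 * qi 24 3 + qi 24 1 * qi 24 3 ^ 2 + 6 * qi 24 1 * qi 24 2 ^ 2 + (-2) * qi 24 1 * qi 24 2 ^ 2 * qi 24 3 + (-7) * qi 24 1 * qi 24 2 ^ 2 * qi 24 3 ^ 2 + (-19) * qi 24 1 * qi 24 2 ^ 4 + (-9) * qi 24 1 * qi 24 2 ^ 4 * qi 24 3 + 11 * qi 24 1 * qi 24 2 ^ 4 * qi 24 3 ^ 2 + 8 * qi 24 1 * qi 24 2 ^ 6 + 15 * qi 24 1 * qi 24 2 ^ 6 * qi 24 3 + (-6) * qi 24 1 * qi 24 2 ^ 6 * qi 24 3 ^ 2 + 8 * qi 24 1 * qi 24 2 ^ 8 + (-7) * qi 24 1 * qi 24 2 ^ 8 * qi 24 3 + qi 24 1 * qi 24 2 ^ 8 * qi 24 3 ^ 2 + (-6) * qi 24 1 *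 qi 24 2 ^ 10 + qi 24 1 * qi 24 2 ^ 10 * qi 24 3 + qi 24 1 * qi 24 2 ^ 12 + (-1) * qi 24 1 ^ 2 + (-1) * qi 24 1 ^ 2 * qi 24 3 + qi 24 1 ^ 2 * qi 24 2 ^ 2 + 7 * qi 24 1 ^ 2 * qi 24 2 ^ 2 * qi 24 3 + 16 * qi 24 1 ^ 2 * qi 24 2 ^ 4 + (-11) * qi 24 1 ^ 2 * qi 24 2 ^ 4 * qi 24 3 + (-26) * qi 24 1 ^ 2 * qi 24 2 ^ 6 + 6 * qi 24 1 ^ 2 * qi 24 2 ^ 6 * qi 24 3 + 13 * qi 24 1 ^ 2 * qi 24 2 ^ 8 + (-1) * qi 24 1 ^ 2 * qi 24 2 ^ 8 * qi 24 3 + (-2) * qi 24 1 ^ 2 * qi 24 2 ^ 10 + qi 24 1 ^ 3 + (-7) * qi 24 1 ^ 3 * qi 24 2 ^ 2 + 11 * qi 24 1 ^ 3 * qi 24 2 ^ 4 + (-6) * qi 24 1 ^ 3 * qi 24 2 ^ 6 + qi 24 1 ^ 3 * qi 24 2 ^ 8) * h2 +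
        (4 * qi 24 2 * qi 24 3 ^ 2 + 4 * qi 24 2 * qi 24 3 ^ 3 + (-3) * qi 24 2 ^ 2 * qi 24 3 * qi 24 4 + (-3) * qi 24 2 ^ 2 * qi 24 3 ^ 2 * qi 24 4 + 3 * qi 24 2 ^ 3 * qi 24 3 + (-11) * qi 24 2 ^ 3 * qi 24 3 ^ 2 + (-10) * qi 24 2 ^ 3 * qi 24 3 ^ 3 + 7 * qi 24 2 ^ 4 * qi 24 3 * qi 24 4 + 4 * qi 24 2 ^ 4 * qi 24 3 ^ 2 * qi 24 4 + (-7) * qi 24 2 ^ 5 * qi 24 3 + 12 * qi 24 2 ^ 5 * qi 24 3 ^ 2 + 6 * qi 24 2 ^ 5 * qi 24 3 ^ 3 + (-5) * qi 24 2 ^ 6 * qi 24 3 * qi 24 4 + (-1) * qi 24 2 ^ 6 * qi 24 3 ^ 2 * qi 24 4 + 5 * qi 24 2 ^ 7 * qi 24 3 + (-6) * qi 24 2 ^ 7 * qi 24 3 ^ 2 + (-1) * qi 24 2 ^ 7 * qi 24 3 ^ 3 + qi 24 2 ^ 8 * qi 24 3 * qi 24 4 + (-1) * qi 24 2 ^ 9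 * qi 24 3 + qi 24 2 ^ 9 * qi 24 3 ^ 2) * h3 +
        ((-1) * qi 24 3 * qi 24 5 + qi 24 3 ^ 2 + (-1) * qi 24 3 ^ 2 * qi 24 5 + qi 24 3 ^ 3 + (-3) * qi 24 2 * qi 24 3 * qi 24 4 + (-3) * qi 24 2 * qi 24 3 ^ 2 * qi 24 4 + 4 * qi 24 2 ^ 2 * qi 24 3 * qi 24 5 + (-4) * qi 24 2 ^ 2 * qi 24 3 ^ 2 + 3 * qi 24 2 ^ 2 * qi 24 3 ^ 2 * qi 24 5 + (-3) * qi 24 2 ^ 2 * qi 24 3 ^ 3 + 7 * qi 24 2 ^ 3 * qi 24 3 * qi 24 4 + 4 * qi 24 2 ^ 3 * qi 24 3 ^ 2 * qi 24 4 + (-4) * qi 24 2 ^ 4 * qi 24 3 * qi 24 5 + 4 * qi 24 2 ^ 4 * qi 24 3 ^ 2 + (-1) * qi 24 2 ^ 4 * qi 24 3 ^ 2 * qi 24 5 + qi 24 2 ^ 4 * qi 24 3 ^ 3 + (-5) * qi 24 2 ^ 5 * qi 24 3 * qi 24 4 + (-1) * qi 24 2 ^ 5 * qi 24 3 ^ 2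 * qi 24 4 + qi 24 2 ^ 6 * qi 24 3 * qi 24 5 + (-1) * qi 24 2 ^ 6 * qi 24 3 ^ 2 + qi 24 2 ^ 7 * qi 24 3 * qi 24 4) * h4 +
        (2 * qi 24 2 * qi 24 3 * qi 24 5 + 2 * qi 24 2 * qi 24 3 ^ 2 * qi 24 5 + (-3) * qi 24 2 ^ 3 * qi 24 3 * qi 24 5 + (-1) * qi 24 2 ^ 3 * qi 24 3 ^ 2 * qi 24 5 + qi 24 2 ^ 5 * qi 24 3 * qi 24 5) * h5 +
        (qi 24 3 * qi 24 5 + qi 24 3 ^ 2 * qi 24 5 + (-2) * qi 24 2 ^ 2 * qi 24 3 * qi 24 5 + (-1) * qi 24 2 ^ 2 * qi 24 3 ^ 2 * qi 24 5 + qi 24 2 ^ 4 * qi 24 3 * qi 24 5) * h6 +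
        ((-1) * qi 24 2 * qi 24 3 * qi 24 5 + (-1) * qi 24 2 * qi 24 3 ^ 2 * qi 24 5 + qi 24 2 ^ 3 * qi 24 3 * qi 24 5) * h7 +
        ((-1) * qi 24 3 * qi 24 5 + (-1) * qi 24 3 ^ 2 * qi 24 5 + qi 24 2 ^ 2 * qi 24 3 * qi 24 5) * h8
  · rw [← add_div, ← add_div, div_eq_iff hq2]
    linear_combination ((-6) * qi 24 2 ^ 6 + 11 * qi 24 2 ^ 8 + (-6) * qi 24 2 ^ 10 + qi 24 2 ^ 12 + 11 * qi 24 1 * qi 24 2 ^ 4 + (-25) * qi 24 1 * qi 24 2 ^ 6 + 16 * qi 24 1 * qi 24 2 ^ 8 + (-3) * qi 24 1 * qi 24 2 ^ 10 + (-6) * qi 24 1 ^ 2 * qi 24 2 ^ 2 + 18 * qi 24 1 ^ 2 * qi 24 2 ^ 4 + (-14) * qi 24 1 ^ 2 * qi 24 2 ^ 6 + 3 * qi 24 1 ^ 2 * qi 24 2 ^ 8 + qi 24 1 ^ 3 + (-4) * qi 24 1 ^ 3 * qi 24 2 ^ 2 + 4 * qi 24 1 ^ 3 * qi 24 2 ^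 4 + (-1) * qi 24 1 ^ 3 * qi 24 2 ^ 6) * h1 +
        ((-1) * qi 24 3 ^ 2 + (-1) * qi 24 3 ^ 3 + (-4) * qi 24 2 ^ 2 * qi 24 3 + qi 24 2 ^ 2 * qi 24 3 ^ 2 + 4 * qi 24 2 ^ 2 * qi 24 3 ^ 3 + (-6) * qi 24 2 ^ 4 + 8 * qi 24 2 ^ 4 * qi 24 3 + 2 * qi 24 2 ^ 4 * qi 24 3 ^ 2 + (-4) * qi 24 2 ^ 4 * qi 24 3 ^ 3 + 11 * qi 24 2 ^ 6 + (-5) * qi 24 2 ^ 6 * qi 24 3 + (-1) * qi 24 2 ^ 6 * qi 24 3 ^ 2 + qi 24 2 ^ 6 * qi 24 3 ^ 3 + (-6) * qi 24 2 ^ 8 + qi 24 2 ^ 8 * qi 24 3 + qi 24 2 ^ 10 + qi 24 1 * qi 24 3 + qi 24 1 * qi 24 3 ^ 2 + 5 * qi 24 1 * qi 24 2 ^ 2 + (-4) * qi 24 1 * qi 24 2 ^ 2 * qi 24 3 ^ 2 + (-8) * qi 24 1 * qi 24 2 ^ 4 + (-6) * qi 24 1 * qi 24 2 ^ 4 * qi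 24 3 + 4 * qi 24 1 * qi 24 2 ^ 4 * qi 24 3 ^ 2 + (-1) * qi 24 1 * qi 24 2 ^ 6 + 5 * qi 24 1 * qi 24 2 ^ 6 * qi 24 3 + (-1) * qi 24 1 * qi 24 2 ^ 6 * qi 24 3 ^ 2 + 4 * qi 24 1 * qi 24 2 ^ 8 + (-1) * qi 24 1 * qi 24 2 ^ 8 * qi 24 3 + (-1) * qi 24 1 * qi 24 2 ^ 10 + (-1) * qi 24 1 ^ 2 + (-1) * qi 24 1 ^ 2 * qi 24 3 + (-1) * qi 24 1 ^ 2 * qi 24 2 ^ 2 + 4 * qi 24 1 ^ 2 * qi 24 2 ^ 2 * qi 24 3 + 10 * qi 24 1 ^ 2 * qi 24 2 ^ 4 + (-4) * qi 24 1 ^ 2 * qi 24 2 ^ 4 * qi 24 3 + (-9) * qi 24 1 ^ 2 * qi 24 2 ^ 6 + qi 24 1 ^ 2 * qi 24 2 ^ 6 * qi 24 3 + 2 * qi 24 1 ^ 2 * qi 24 2 ^ 8 + qi 24 1 ^ 3 + (-4) * qi 24 1 ^ 3 * qi 24 2 ^ 2 + 4 * qi 24 1 ^ 3 * qi 24 2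 ^ 4 + (-1) * qi 24 1 ^ 3 * qi 24 2 ^ 6) * h2 +
        (qi 24 3 ^ 2 * qi 24 4 + (-1) * qi 24 2 * qi 24 3 * qi 24 4 ^ 2 + 3 * qi 24 2 * qi 24 3 ^ 2 + 4 * qi 24 2 * qi 24 3 ^ 3 + (-2) * qi 24 2 ^ 2 * qi 24 3 * qi 24 4 + (-4) * qi 24 2 ^ 2 * qi 24 3 ^ 2 * qi 24 4 + 2 * qi 24 2 ^ 3 * qi 24 3 + qi 24 2 ^ 3 * qi 24 3 * qi 24 4 ^ 2 + (-5) * qi 24 2 ^ 3 * qi 24 3 ^ 2 + (-4) * qi 24 2 ^ 3 * qi 24 3 ^ 3 + 3 * qi 24 2 ^ 4 * qi 24 3 * qi 24 4 + qi 24 2 ^ 4 * qi 24 3 ^ 2 * qi 24 4 + (-3) * qi 24 2 ^ 5 * qi 24 3 + 4 * qi 24 2 ^ 5 * qi 24 3 ^ 2 + qi 24 2 ^ 5 * qi 24 3 ^ 3 + (-1) * qi 24 2 ^ 6 * qi 24 3 * qi 24 4 + qi 24 2 ^ 7 * qi 24 3 + (-1) * qi 24 2 ^ 7 * qi 24 3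 ^ 2) * h3 +
        ((-1) * qi 24 3 * qi 24 5 + (-1) * qi 24 3 * qi 24 4 ^ 2 + qi 24 3 ^ 2 + (-1) * qi 24 3 ^ 2 * qi 24 5 + qi 24 3 ^ 3 + (-3) * qi 24 2 * qi 24 3 * qi 24 4 + qi 24 2 * qi 24 3 * qi 24 4 * qi 24 5 + (-2) * qi 24 2 * qi 24 3 ^ 2 * qi 24 4 + 3 * qi 24 2 ^ 2 * qi 24 3 * qi 24 5 + qi 24 2 ^ 2 * qi 24 3 * qi 24 4 ^ 2 + (-3) * qi 24 2 ^ 2 * qi 24 3 ^ 2 + 4 * qi 24 2 ^ 3 * qi 24 3 * qi 24 4 + (-1) * qi 24 2 ^ 4 * qi 24 3 * qi 24 5 + qi 24 2 ^ 4 * qi 24 3 ^ 2 + (-1) * qi 24 2 ^ 5 * qi 24 3 * qi 24 4) * h4 +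
        (2 * qi 24 2 * qi 24 3 * qi 24 5 + (-1) * qi 24 2 ^ 3 * qi 24 3 * qi 24 5) * h5 +
        (qi 24 3 * qi 24 5 + (-1) * qi 24 2 ^ 2 * qi 24 3 * qi 24 5) * h6 +
        ((-1) * qi 24 2 * qi 24 3 * qi 24 5) * h7 +
        ((-1) * qi 24 3 * qi 24 5) * h8
  · rw [← add_div, div_add' _ _ _ hq2, div_eq_iff hq2]
    linear_combination (14 * qi 24 2 ^ 4 + (-125) * qi 24 2 ^ 6 + 345 * qi 24 2 ^ 8 + (-455) * qi 24 2 ^ 10 + 322 * qi 24 2 ^ 12 + (-125) * qi 24 2 ^ 14 + 25 * qi 24 2 ^ 16 + (-2) * qi 24 2 ^ 18 + (-2) * qi 24 1 * qi 24 2 ^ 2 + 56 * qi 24 1 * qi 24 2 ^ 4 + (-232) * qi 24 1 * qi 24 2 ^ 6 + 396 * qi 24 1 * qi 24 2 ^ 8 + (-337) * qi 24 1 * qi 24 2 ^ 10 + 151 * qi 24 1 * qi 24 2 ^ 12 + (-34) * qi 24 1 * qi 24 2 ^ 14 + 3 * qi 24 1 * qi 24 2 ^ 16 + (-8) * qi 24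 1 ^ 2 * qi 24 2 ^ 2 + 37 * qi 24 1 ^ 2 * qi 24 2 ^ 4 + (-72) * qi 24 1 ^ 2 * qi 24 2 ^ 6 + 72 * qi 24 1 ^ 2 * qi 24 2 ^ 8 + (-38) * qi 24 1 ^ 2 * qi 24 2 ^ 10 + 10 * qi 24 1 ^ 2 * qi 24 2 ^ 12 + (-1) * qi 24 1 ^ 2 * qi 24 2 ^ 14 + qi 24 1 ^ 3 + (-3) * qi 24 1 ^ 3 * qi 24 2 ^ 2 + 3 * qi 24 1 ^ 3 * qi 24 2 ^ 4 + (-1) * qi 24 1 ^ 3 * qi 24 2 ^ 6) * h1 +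
        (2 * qi 24 2 ^ 2 + (-13) * qi 24 2 ^ 4 + 28 * qi 24 2 ^ 6 + (-23) * qi 24 2 ^ 8 + 8 * qi 24 2 ^ 10 + (-1) * qi 24 2 ^ 12) * h10 +
        (2 * qi 24 2 ^ 3 + (-13) * qi 24 2 ^ 5 + 28 * qi 24 2 ^ 7 + (-23) * qi 24 2 ^ 9 + 8 * qi 24 2 ^ 11 + (-1) * qi 24 2 ^ 13) * h11 +
        ((-1) * qi 24 2 ^ 2 + (15/2 : ℝ) * qi 24 2 ^ 4 + (-41/2 : ℝ) * qi 24 2 ^ 6 + (51/2 : ℝ) * qi 24 2 ^ 8 + (-31/2 : ℝ) * qi 24 2 ^ 10 + (9/2 : ℝ) * qi 24 2 ^ 12 + (-1/2 : ℝ) * qi 24 2 ^ 14) * h12 +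
        ((-1) * qi 24 3 ^ 2 + (-1) * qi 24 3 ^ 3 + 2 * qi 24 2 ^ 2 + (-4) * qi 24 2 ^ 2 * qi 24 3 + (-2) * qi 24 2 ^ 2 * qi 24 3 ^ 2 + 3 * qi 24 2 ^ 2 * qi 24 3 ^ 3 + (-37) * qi 24 2 ^ 4 + (-12) * qi 24 2 ^ 4 * qi 24 3 + 25 * qi 24 2 ^ 4 * qi 24 3 ^ 2 + (-3) * qi 24 2 ^ 4 * qi 24 3 ^ 3 + 122 * qi 24 2 ^ 6 + 101 * qi 24 2 ^ 6 * qi 24 3 + (-62) * qi 24 2 ^ 6 * qi 24 3 ^ 2 + qi 24 2 ^ 6 * qi 24 3 ^ 3 + (-180) * qi 24 2 ^ 8 + (-191) * qi 24 2 ^ 8 * qi 24 3 + 69 * qi 24 2 ^ 8 * qi 24 3 ^ 2 + 138 * qi 24 2 ^ 10 + 158 * qi 24 2 ^ 10 * qi 24 3 + (-38) * qi 24 2 ^ 10 * qi 24 3 ^ 2 + (-57) * qi 24 2 ^ 12 + (-65) * qi 24 2 ^ 12 * qi 24 3 + 10 * qi 24 2 ^ 12 * qi 24 3 ^ 2 +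 12 * qi 24 2 ^ 14 + 13 * qi 24 2 ^ 14 * qi 24 3 + (-1) * qi 24 2 ^ 14 * qi 24 3 ^ 2 + (-1) * qi 24 2 ^ 16 + (-1) * qi 24 2 ^ 16 * qi 24 3 + qi 24 1 * qi 24 3 + qi 24 1 * qi 24 3 ^ 2 + 5 * qi 24 1 * qi 24 2 ^ 2 + 3 * qi 24 1 * qi 24 2 ^ 2 * qi 24 3 + (-3) * qi 24 1 * qi 24 2 ^ 2 * qi 24 3 ^ 2 + 15 * qi 24 1 * qi 24 2 ^ 4 + (-28) * qi 24 1 * qi 24 2 ^ 4 * qi 24 3 + 3 * qi 24 1 * qi 24 2 ^ 4 * qi 24 3 ^ 2 + (-129) * qi 24 1 * qi 24 2 ^ 6 + 65 * qi 24 1 * qi 24 2 ^ 6 * qi 24 3 + (-1) * qi 24 1 * qi 24 2 ^ 6 * qi 24 3 ^ 2 + 256 * qi 24 1 * qi 24 2 ^ 8 + (-70) * qi 24 1 * qi 24 2 ^ 8 * qi 24 3 + (-228) * qi 24 1 * qi 24 2 ^ 10 + 38 * qi 24 1 * qi 24 2 ^ 10 * qi 24 3 + 103 * qi 24 1 * qi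 24 2 ^ 12 + (-10) * qi 24 1 * qi 24 2 ^ 12 * qi 24 3 + (-23) * qi 24 1 * qi 24 2 ^ 14 + qi 24 1 * qi 24 2 ^ 14 * qi 24 3 + 2 * qi 24 1 * qi 24 2 ^ 16 + (-1) * qi 24 1 ^ 2 + (-1) * qi 24 1 ^ 2 * qi 24 3 + (-4) * qi 24 1 ^ 2 * qi 24 2 ^ 2 + 3 * qi 24 1 ^ 2 * qi 24 2 ^ 2 * qi 24 3 + 31 * qi 24 1 ^ 2 * qi 24 2 ^ 4 + (-3) * qi 24 1 ^ 2 * qi 24 2 ^ 4 * qi 24 3 + (-68) * qi 24 1 ^ 2 * qi 24 2 ^ 6 + qi 24 1 ^ 2 * qi 24 2 ^ 6 * qi 24 3 + 71 * qi 24 1 ^ 2 * qi 24 2 ^ 8 + (-38) * qi 24 1 ^ 2 * qi 24 2 ^ 10 + 10 * qi 24 1 ^ 2 * qi 24 2 ^ 12 + (-1) * qi 24 1 ^ 2 * qi 24 2 ^ 14 + qi 24 1 ^ 3 + (-3) * qi 24 1 ^ 3 * qi 24 2 ^ 2 + 3 * qi 24 1 ^ 3 * qi 24 2 ^ 4 +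 (-1) * qi 24 1 ^ 3 * qi 24 2 ^ 6) * h2 +
        (3 * qi 24 2 * qi 24 3 ^ 2 + 2 * qi 24 2 * qi 24 3 ^ 3 + (-2) * qi 24 2 ^ 2 * qi 24 3 * qi 24 4 + (-1) * qi 24 2 ^ 2 * qi 24 3 ^ 2 * qi 24 4 + (-12) * qi 24 2 ^ 3 + 2 * qi 24 2 ^ 3 * qi 24 3 + 12 * qi 24 2 ^ 3 * qi 24 3 ^ 2 + (-3) * qi 24 2 ^ 3 * qi 24 3 ^ 3 + (-23) * qi 24 2 ^ 4 * qi 24 3 * qi 24 4 + qi 24 2 ^ 4 * qi 24 3 ^ 2 * qi 24 4 + 88 * qi 24 2 ^ 5 + 12 * qi 24 2 ^ 5 * qi 24 4 ^ 2 + 23 * qi 24 2 ^ 5 * qi 24 3 + (-53) * qi 24 2 ^ 5 * qi 24 3 ^ 2 + qi 24 2 ^ 5 * qi 24 3 ^ 3 + (-12) * qi 24 2 ^ 6 * qi 24 4 + 50 * qi 24 2 ^ 6 * qi 24 3 * qi 24 4 + (-223) * qi 24 2 ^ 7 + (-16) * qi 24 2 ^ 7 * qi 24 4 ^ 2 + (-62)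 * qi 24 2 ^ 7 * qi 24 3 + 67 * qi 24 2 ^ 7 * qi 24 3 ^ 2 + 16 * qi 24 2 ^ 8 * qi 24 4 + (-35) * qi 24 2 ^ 8 * qi 24 3 * qi 24 4 + 275 * qi 24 2 ^ 9 + 7 * qi 24 2 ^ 9 * qi 24 4 ^ 2 + 51 * qi 24 2 ^ 9 * qi 24 3 + (-38) * qi 24 2 ^ 9 * qi 24 3 ^ 2 + (-7) * qi 24 2 ^ 10 * qi 24 4 + 10 * qi 24 2 ^ 10 * qi 24 3 * qi 24 4 + (-184) * qi 24 2 ^ 11 + (-1) * qi 24 2 ^ 11 * qi 24 4 ^ 2 + (-17) * qi 24 2 ^ 11 * qi 24 3 + 10 * qi 24 2 ^ 11 * qi 24 3 ^ 2 + qi 24 2 ^ 12 * qi 24 4 + (-1) * qi 24 2 ^ 12 * qi 24 3 * qi 24 4 + 68 * qi 24 2 ^ 13 + 2 * qi 24 2 ^ 13 * qi 24 3 + (-1) * qi 24 2 ^ 13 * qi 24 3 ^ 2 + (-13) * qi 24 2 ^ 15 + qi 24 2 ^ 17) * h3 +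
        (qi 24 5 ^ 2 + (-1) * qi 24 3 * qi 24 5 + qi 24 3 ^ 2 + (-1) * qi 24 3 ^ 2 * qi 24 5 + qi 24 3 ^ 3 + qi 24 2 * qi 24 4 * qi 24 5 + (-2) * qi 24 2 * qi 24 3 * qi 24 4 + (-1) * qi 24 2 * qi 24 3 ^ 2 * qi 24 4 + (-2) * qi 24 2 ^ 2 + 2 * qi 24 2 ^ 2 * qi 24 5 ^ 2 + (-2) * qi 24 2 ^ 2 * qi 24 3 * qi 24 5 + 2 * qi 24 2 ^ 2 * qi 24 3 ^ 2 + qi 24 2 ^ 2 * qi 24 3 ^ 2 * qi 24 5 + (-1) * qi 24 2 ^ 2 * qi 24 3 ^ 3 + 9 * qi 24 2 ^ 3 * qi 24 4 * qi 24 5 + (-11) * qi 24 2 ^ 3 * qi 24 3 * qi 24 4 + qi 24 2 ^ 3 * qi 24 3 ^ 2 * qi 24 4 + 19 * qi 24 2 ^ 4 + (-7) * qi 24 2 ^ 4 * qi 24 5 ^ 2 + 12 * qi 24 2 ^ 4 * qi 24 4 ^ 2 + 7 * qi 24 2 ^ 4 * qi 24 3 * qi 24 5 + (-7) * qi 24 2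 ^ 4 * qi 24 3 ^ 2 + (-15) * qi 24 2 ^ 5 * qi 24 4 * qi 24 5 + 22 * qi 24 2 ^ 5 * qi 24 3 * qi 24 4 + (-69) * qi 24 2 ^ 6 + 5 * qi 24 2 ^ 6 * qi 24 5 ^ 2 + (-16) * qi 24 2 ^ 6 * qi 24 4 ^ 2 + (-5) * qi 24 2 ^ 6 * qi 24 3 * qi 24 5 + 5 * qi 24 2 ^ 6 * qi 24 3 ^ 2 + 7 * qi 24 2 ^ 7 * qi 24 4 * qi 24 5 + (-12) * qi 24 2 ^ 7 * qi 24 3 * qi 24 4 + 120 * qi 24 2 ^ 8 + (-1) * qi 24 2 ^ 8 * qi 24 5 ^ 2 + 7 * qi 24 2 ^ 8 * qi 24 4 ^ 2 + qi 24 2 ^ 8 * qi 24 3 * qi 24 5 + (-1) * qi 24 2 ^ 8 * qi 24 3 ^ 2 + (-1) * qi 24 2 ^ 9 * qi 24 4 * qi 24 5 + 2 * qi 24 2 ^ 9 * qi 24 3 * qi 24 4 + (-105) * qi 24 2 ^ 10 + (-1) * qi 24 2 ^ 10 * qi 24 4 ^ 2 + 48 * qi 24 2 ^ 12 + (-11)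 * qi 24 2 ^ 14 + qi 24 2 ^ 16) * h4 +
        ((-1) * qi 24 2 ^ 2 * qi 24 5 * qi 24 6 + qi 24 2 ^ 2 * qi 24 4 * qi 24 5 + 4 * qi 24 2 ^ 3 + (-6) * qi 24 2 ^ 3 * qi 24 5 ^ 2 + 3 * qi 24 2 ^ 4 * qi 24 5 * qi 24 6 + (-3) * qi 24 2 ^ 4 * qi 24 4 * qi 24 5 + (-28) * qi 24 2 ^ 5 + 5 * qi 24 2 ^ 5 * qi 24 5 ^ 2 + (-1) * qi 24 2 ^ 6 * qi 24 5 * qi 24 6 + qi 24 2 ^ 6 * qi 24 4 * qi 24 5 + 69 * qi 24 2 ^ 7 + (-1) * qi 24 2 ^ 7 * qi 24 5 ^ 2 + (-74) * qi 24 2 ^ 9 + 39 * qi 24 2 ^ 11 + (-10) * qi 24 2 ^ 13 + qi 24 2 ^ 15) * h5 +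
        ((-1) * qi 24 5 ^ 2 + (-1) * qi 24 2 * qi 24 5 * qi 24 6 + 2 * qi 24 2 ^ 2 + 2 * qi 24 2 ^ 2 * qi 24 5 * qi 24 7 + (-2) * qi 24 2 ^ 2 * qi 24 5 ^ 2 + 3 * qi 24 2 ^ 3 * qi 24 5 * qi 24 6 + (-15) * qi 24 2 ^ 4 + (-1) * qi 24 2 ^ 4 * qi 24 5 * qi 24 7 + qi 24 2 ^ 4 * qi 24 5 ^ 2 + (-1) * qi 24 2 ^ 5 * qi 24 5 * qi 24 6 + 41 * qi 24 2 ^ 6 + (-51) * qi 24 2 ^ 8 + 31 * qi 24 2 ^ 10 + (-9) * qi 24 2 ^ 12 + qi 24 2 ^ 14) * h6 +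
        (qi 24 2 * qi 24 5 * qi 24 7 + (-2) * qi 24 2 ^ 3 + (-1) * qi 24 2 ^ 3 * qi 24 5 * qi 24 7 + 13 * qi 24 2 ^ 5 + (-28) * qi 24 2 ^ 7 + 23 * qi 24 2 ^ 9 + (-8) * qi 24 2 ^ 11 + qi 24 2 ^ 13) * h7 +
        ((-2) * qi 24 2 ^ 2 + (-1) * qi 24 2 ^ 2 * qi 24 5 * qi 24 7 + 13 * qi 24 2 ^ 4 + (-28) * qi 24 2 ^ 6 + 23 * qi 24 2 ^ 8 + (-8) * qi 24 2 ^ 10 + qi 24 2 ^ 12) * h8 +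
        ((-1) * qi 24 2 * qi 24 5 * qi 24 7) * h9 +
        ((-3) * qi 24 2 ^ 3 + (41/2 : ℝ) * qi 24 2 ^ 5 + (-97/2 : ℝ) * qi 24 2 ^ 7 + (97/2 : ℝ) * qi 24 2 ^ 9 + (-47/2 : ℝ) * qi 24 2 ^ 11 + (11/2 : ℝ) * qi 24 2 ^ 13 + (-1/2 : ℝ) * qi 24 2 ^ 15) * hR
  · rw [← add_div, div_eq_iff hq2]
    linear_combination ((-1) * qi 24 5 ^ 2 + (-2) * qi 24 2 * qi 24 4 * qi 24 5 + 3 * qi 24 2 ^ 2 * qi 24 5 ^ 2 + qi 24 2 ^ 3 * qi 24 4 * qi 24 5 + (-1) * qi 24 2 ^ 4 * qi 24 5 ^ 2) * h4 +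
        (2 * qi 24 2 * qi 24 5 ^ 2 + 2 * qi 24 2 * qi 24 3 * qi 24 5 + (-2) * qi 24 2 ^ 2 * qi 24 4 * qi 24 5 + (-1) * qi 24 2 ^ 3 * qi 24 5 ^ 2 + (-1) * qi 24 2 ^ 3 * qi 24 3 * qi 24 5 + qi 24 2 ^ 4 * qi 24 4 * qi 24 5) * h5 +
        (qi 24 5 ^ 2 + qi 24 3 * qi 24 5 + (-1) * qi 24 2 * qi 24 4 * qi 24 5 + (-1) * qi 24 2 ^ 2 * qi 24 5 ^ 2 + (-1) * qi 24 2 ^ 2 * qi 24 3 * qi 24 5 + qi 24 2 ^ 3 * qi 24 4 * qi 24 5) * h6 +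
        ((-1) * qi 24 2 * qi 24 5 ^ 2 + (-1) * qi 24 2 * qi 24 3 * qi 24 5 + qi 24 2 ^ 2 * qi 24 4 * qi 24 5) * h7 +
        ((-1) * qi 24 5 ^ 2 + (-1) * qi 24 3 * qi 24 5 + qi 24 2 * qi 24 4 * qi 24 5) * h8
  · rw [← add_div, div_eq_iff hq2]
    linear_combination (19 * qi 24 2 ^ 4 + (-98) * qi 24 2 ^ 6 + 178 * qi 24 2 ^ 8 + (-151) * qi 24 2 ^ 10 + 64 * qi 24 2 ^ 12 + (-13) * qi 24 2 ^ 14 + qi 24 2 ^ 16 + (-8) * qi 24 1 * qi 24 2 ^ 2 + 54 * qi 24 1 * qi 24 2 ^ 4 + (-129) * qi 24 1 * qi 24 2 ^ 6 + 130 * qi 24 1 * qi 24 2 ^ 8 + (-61) * qi 24 1 * qi 24 2 ^ 10 + 13 * qi 24 1 * qi 24 2 ^ 12 + (-1) * qi 24 1 * qi 24 2 ^ 14 + qi 24 1 ^ 2 + (-8) * qi 24 1 ^ 2 * qi 24 2 ^ 2 + 18 * qi 24 1 ^ 2 * qi 24 2 ^ 4 + (-17) * qi 24 1 ^ 2 *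 qi 24 2 ^ 6 + 7 * qi 24 1 ^ 2 * qi 24 2 ^ 8 + (-1) * qi 24 1 ^ 2 * qi 24 2 ^ 10) * h1 +
        (qi 24 2 ^ 2 + (-10) * qi 24 2 ^ 4 + 15 * qi 24 2 ^ 6 + (-7) * qi 24 2 ^ 8 + qi 24 2 ^ 10) * h10 +
        (qi 24 2 ^ 3 + (-10) * qi 24 2 ^ 5 + 15 * qi 24 2 ^ 7 + (-7) * qi 24 2 ^ 9 + qi 24 2 ^ 11) * h11 +
        ((-1/2 : ℝ) * qi 24 2 ^ 2 + (11/2 : ℝ) * qi 24 2 ^ 4 + (-25/2 : ℝ) * qi 24 2 ^ 6 + 11 * qi 24 2 ^ 8 + (-4) * qi 24 2 ^ 10 + (1/2 : ℝ) * qi 24 2 ^ 12) * h12 +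
        (qi 24 3 + qi 24 3 ^ 2 + 7 * qi 24 2 ^ 2 + (-2) * qi 24 2 ^ 2 * qi 24 3 + (-8) * qi 24 2 ^ 2 * qi 24 3 ^ 2 + (-34) * qi 24 2 ^ 4 + (-20) * qi 24 2 ^ 4 * qi 24 3 + 18 * qi 24 2 ^ 4 * qi 24 3 ^ 2 + 59 * qi 24 2 ^ 6 + 76 * qi 24 2 ^ 6 * qi 24 3 + (-17) * qi 24 2 ^ 6 * qi 24 3 ^ 2 + (-46) * qi 24 2 ^ 8 + (-89) * qi 24 2 ^ 8 * qi 24 3 + 7 * qi 24 2 ^ 8 * qi 24 3 ^ 2 + 16 * qi 24 2 ^ 10 + 46 * qi 24 2 ^ 10 * qi 24 3 + (-1) * qi 24 2 ^ 10 * qi 24 3 ^ 2 + (-2) * qi 24 2 ^ 12 + (-11) * qi 24 2 ^ 12 * qi 24 3 + qi 24 2 ^ 14 * qi 24 3 + (-1) * qi 24 1 + (-1) * qi 24 1 * qi 24 3 + qi 24 1 * qi 24 2 ^ 2 + 8 * qi 24 1 * qi 24 2 ^ 2 * qi 24 3 + 28 * qi 24 1 * qi 24 2 ^ 4 + (-18)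 * qi 24 1 * qi 24 2 ^ 4 * qi 24 3 + (-94) * qi 24 1 * qi 24 2 ^ 6 + 17 * qi 24 1 * qi 24 2 ^ 6 * qi 24 3 + 106 * qi 24 1 * qi 24 2 ^ 8 + (-7) * qi 24 1 * qi 24 2 ^ 8 * qi 24 3 + (-53) * qi 24 1 * qi 24 2 ^ 10 + qi 24 1 * qi 24 2 ^ 10 * qi 24 3 + 12 * qi 24 1 * qi 24 2 ^ 12 + (-1) * qi 24 1 * qi 24 2 ^ 14 + qi 24 1 ^ 2 + (-8) * qi 24 1 ^ 2 * qi 24 2 ^ 2 + 18 * qi 24 1 ^ 2 * qi 24 2 ^ 4 + (-17) * qi 24 1 ^ 2 * qi 24 2 ^ 6 + 7 * qi 24 1 ^ 2 * qi 24 2 ^ 8 + (-1) * qi 24 1 ^ 2 * qi 24 2 ^ 10) * h2 +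
        ((-5) * qi 24 2 * qi 24 3 + (-5) * qi 24 2 * qi 24 3 ^ 2 + 6 * qi 24 2 ^ 2 * qi 24 4 + 7 * qi 24 2 ^ 2 * qi 24 3 * qi 24 4 + (-12) * qi 24 2 ^ 3 + (-3) * qi 24 2 ^ 3 * qi 24 4 ^ 2 + 7 * qi 24 2 ^ 3 * qi 24 3 + 17 * qi 24 2 ^ 3 * qi 24 3 ^ 2 + qi 24 2 ^ 4 * qi 24 4 + (-14) * qi 24 2 ^ 4 * qi 24 3 * qi 24 4 + 64 * qi 24 2 ^ 5 + 4 * qi 24 2 ^ 5 * qi 24 4 ^ 2 + 31 * qi 24 2 ^ 5 * qi 24 3 + (-17) * qi 24 2 ^ 5 * qi 24 3 ^ 2 + (-22) * qi 24 2 ^ 6 * qi 24 4 + 7 * qi 24 2 ^ 6 * qi 24 3 * qi 24 4 + (-119) * qi 24 2 ^ 7 + (-1) * qi 24 2 ^ 7 * qi 24 4 ^ 2 + (-59) * qi 24 2 ^ 7 * qi 24 3 + 7 * qi 24 2 ^ 7 * qi 24 3 ^ 2 + 22 * qi 24 2 ^ 8 * qi 24 4 + (-1) * qi 24 2 ^ 8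 * qi 24 3 * qi 24 4 + 105 * qi 24 2 ^ 9 + 37 * qi 24 2 ^ 9 * qi 24 3 + (-1) * qi 24 2 ^ 9 * qi 24 3 ^ 2 + (-8) * qi 24 2 ^ 10 * qi 24 4 + (-48) * qi 24 2 ^ 11 + (-10) * qi 24 2 ^ 11 * qi 24 3 + qi 24 2 ^ 12 * qi 24 4 + 11 * qi 24 2 ^ 13 + qi 24 2 ^ 13 * qi 24 3 + (-1) * qi 24 2 ^ 15) * h3 +
        (qi 24 5 + (-1) * qi 24 5 ^ 2 + (-1) * qi 24 3 + qi 24 3 * qi 24 5 + (-1) * qi 24 3 ^ 2 + 4 * qi 24 2 * qi 24 4 + (-3) * qi 24 2 * qi 24 4 * qi 24 5 + 4 * qi 24 2 * qi 24 3 * qi 24 4 + (-1) * qi 24 2 ^ 2 + (-3) * qi 24 2 ^ 2 * qi 24 5 + 3 * qi 24 2 ^ 2 * qi 24 5 ^ 2 + (-3) * qi 24 2 ^ 2 * qi 24 4 ^ 2 + 3 * qi 24 2 ^ 2 * qi 24 3 + (-3) * qi 24 2 ^ 2 * qi 24 3 * qi 24 5 + 3 * qi 24 2 ^ 2 * qi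 24 3 ^ 2 + (-5) * qi 24 2 ^ 3 * qi 24 4 + 4 * qi 24 2 ^ 3 * qi 24 4 * qi 24 5 + (-7) * qi 24 2 ^ 3 * qi 24 3 * qi 24 4 + 13 * qi 24 2 ^ 4 + (-2) * qi 24 2 ^ 4 * qi 24 5 + (-1) * qi 24 2 ^ 4 * qi 24 5 ^ 2 + 4 * qi 24 2 ^ 4 * qi 24 4 ^ 2 + 2 * qi 24 2 ^ 4 * qi 24 3 + qi 24 2 ^ 4 * qi 24 3 * qi 24 5 + (-1) * qi 24 2 ^ 4 * qi 24 3 ^ 2 + (-14) * qi 24 2 ^ 5 * qi 24 4 + (-1) * qi 24 2 ^ 5 * qi 24 4 * qi 24 5 + 2 * qi 24 2 ^ 5 * qi 24 3 * qi 24 4 + (-46) * qi 24 2 ^ 6 + 10 * qi 24 2 ^ 6 * qi 24 5 + (-1) * qi 24 2 ^ 6 * qi 24 4 ^ 2 + (-10) * qi 24 2 ^ 6 * qi 24 3 + 20 * qi 24 2 ^ 7 * qi 24 4 + 62 * qi 24 2 ^ 8 + (-6) * qi 24 2 ^ 8 * qi 24 5 + 6 * qi 24 2 ^ 8 * qi 24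 3 + (-8) * qi 24 2 ^ 9 * qi 24 4 + (-37) * qi 24 2 ^ 10 + qi 24 2 ^ 10 * qi 24 5 + (-1) * qi 24 2 ^ 10 * qi 24 3 + qi 24 2 ^ 11 * qi 24 4 + 10 * qi 24 2 ^ 12 + (-1) * qi 24 2 ^ 14) * h4 +
        ((-3) * qi 24 2 * qi 24 5 + 2 * qi 24 2 * qi 24 5 ^ 2 + 2 * qi 24 2 ^ 2 * qi 24 6 + (-2) * qi 24 2 ^ 2 * qi 24 4 + 2 * qi 24 2 ^ 3 + (-1) * qi 24 2 ^ 3 * qi 24 5 ^ 2 + 3 * qi 24 2 ^ 4 * qi 24 6 + (-3) * qi 24 2 ^ 4 * qi 24 4 + (-21) * qi 24 2 ^ 5 + 9 * qi 24 2 ^ 5 * qi 24 5 + (-4) * qi 24 2 ^ 6 * qi 24 6 + 4 * qi 24 2 ^ 6 * qi 24 4 + 40 * qi 24 2 ^ 7 + (-6) * qi 24 2 ^ 7 * qi 24 5 + qi 24 2 ^ 8 * qi 24 6 + (-1) * qi 24 2 ^ 8 * qi 24 4 + (-29) * qi 24 2 ^ 9 + qi 24 2 ^ 9 * qi 24 5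 + 9 * qi 24 2 ^ 11 + (-1) * qi 24 2 ^ 13) * h5 +
        (qi 24 7 + (-1) * qi 24 5 + qi 24 5 ^ 2 + 2 * qi 24 2 * qi 24 6 + qi 24 2 ^ 2 + (-1) * qi 24 2 ^ 2 * qi 24 5 ^ 2 + 2 * qi 24 2 ^ 3 * qi 24 6 + (-11) * qi 24 2 ^ 4 + (-2) * qi 24 2 ^ 4 * qi 24 7 + 2 * qi 24 2 ^ 4 * qi 24 5 + (-4) * qi 24 2 ^ 5 * qi 24 6 + 25 * qi 24 2 ^ 6 + qi 24 2 ^ 6 * qi 24 7 + (-1) * qi 24 2 ^ 6 * qi 24 5 + qi 24 2 ^ 7 * qi 24 6 + (-22) * qi 24 2 ^ 8 + 8 * qi 24 2 ^ 10 + (-1) * qi 24 2 ^ 12) * h6 +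
        ((-1) * qi 24 2 * qi 24 7 + (-1) * qi 24 2 * qi 24 5 ^ 2 + (-1) * qi 24 2 ^ 3 + (-2) * qi 24 2 ^ 3 * qi 24 7 + qi 24 2 ^ 4 * qi 24 8 + (-1) * qi 24 2 ^ 4 * qi 24 6 + 10 * qi 24 2 ^ 5 + qi 24 2 ^ 5 * qi 24 7 + (-15) * qi 24 2 ^ 7 + 7 * qi 24 2 ^ 9 + (-1) * qi 24 2 ^ 11) * h7 +
        ((-1) * qi 24 7 + (-1) * qi 24 5 ^ 2 + (-1) * qi 24 2 ^ 2 + qi 24 2 ^ 2 * qi 24 9 + (-1) * qi 24 2 ^ 2 * qi 24 7 + qi 24 2 ^ 3 * qi 24 8 + 10 * qi 24 2 ^ 4 + (-15) * qi 24 2 ^ 6 + 7 * qi 24 2 ^ 8 + (-1) * qi 24 2 ^ 10) * h8 +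
        ((-3/2 : ℝ) * qi 24 2 ^ 3 + (31/2 : ℝ) * qi 24 2 ^ 5 + (-55/2 : ℝ) * qi 24 2 ^ 7 + 18 * qi 24 2 ^ 9 + (-5) * qi 24 2 ^ 11 + (1/2 : ℝ) * qi 24 2 ^ 13) * hR
end

section
/- Let n ≥ 3 be an integer, q = exp(iπ/(2n+1)), and let i be an integer with 2 ≤ i ≤ n−1. Define the real symmetric 3×3 matrix U with entries U₁₁ = [i][2i−3]/([i−1][2i−1]), U₂₂ = 1/([i−1][i]), U₃₃ = [i−1][2i+1]/([i][2i−1]), U₁₂ = U₂₁ = (−1)^{i+1}√([2i−3])/([i−1]√([2i−1])), U₁₃ = U₃₁ = √([2i−3][2i+1])/[2i−1], U₂₃ = U₃₂ = (−1)^{i+1}√([2i+1])/([i]√([2i−1])) (all quantum integers at q, all square-root arguments nonnegative). Then trace(U) = [2]_q and U² = [2]_q · U; that is, U is [2]_q times a rank-one orthogonal projection. (This is the diagonal block U^{(i,i)} of the Hecke algebra representation attached to the cell system of 𝒜^((2n+1)*), and U² = [2]U is the Hecke quadratic relation.) -/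
open Real in
private lemma trig_key' (x t : ℝ) :
    sin x ^ 2 * sin (2*x - 3*t) + sin (2*x - t) * sin t ^ 2
      + sin (x - t) ^ 2 * sin (2*x + t)
    = 2 * cos t * sin (x - t) * sin x * sin (2*x - t) := by
  have h2x : (2:ℝ)*x = x + x := by ring
  have h3t : (3:ℝ)*t = t + t + t := by ring
  simp only [h2x, h3t, sin_sub, cos_sub, sin_add, cos_add]
  linear_combination (cos x^2 * sin t^3 - 2*sin x*cos x*sin t^2*cos t - sin x^2*sin t^3) *
    sin_sq_add_cos_sq x

open Real in
private lemma qsum' (x t : ℝ) (ht : sin t ≠ 0) (hx : sin x ≠ 0) (hxt : sin (x-t) ≠ 0)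
    (hd : sin (2*x-t) ≠ 0) :
    (sin x / sin t) * (sin (2*x-3*t) / sin t) / ((sin (x-t)/sin t) * (sin (2*x-t)/sin t))
    + 1 / ((sin (x-t)/sin t) * (sin x/sin t))
    + (sin (x-t)/sin t) * (sin (2*x+t)/sin t) / ((sin x/sin t) * (sin (2*x-t)/sin t))
    = 2 * cos t := by
  field_simp
  linear_combination trig_key' x t

private lemma rank_one_proj' (w0 w1 w2 r : ℝ) (h : w0*w0 + w1*w1 + w2*w2 = r) :
    (!![w0*w0, w0*w1, w0*w2; w0*w1, w1*w1, w1*w2; w0*w2, w1*w2, w2*w2]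
        : Matrix (Fin 3) (Fin 3) ℝ).trace = r ∧
    (!![w0*w0, w0*w1, w0*w2; w0*w1, w1*w1, w1*w2; w0*w2, w1*w2, w2*w2]
        : Matrix (Fin 3) (Fin 3) ℝ) *
      !![w0*w0, w0*w1, w0*w2; w0*w1, w1*w1, w1*w2; w0*w2, w1*w2, w2*w2] =
    r • !![w0*w0, w0*w1, w0*w2; w0*w1, w1*w1, w1*w2; w0*w2, w1*w2, w2*w2] := by
  constructor
  · rw [Matrix.trace_fin_three_of]; linarith
  · ext j k
    rw [Matrix.mul_apply, Fin.sum_univ_three, Matrix.smul_apply, smul_eq_mul]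
    fin_cases j <;> fin_cases k <;> simp
    · linear_combination (w0*w0) * h
    · linear_combination (w0*w1) * h
    · linear_combination (w0*w2) * h
    · linear_combination (w1*w0) * h
    · linear_combination (w1*w1) * h
    · linear_combination (w1*w2) * h
    · linear_combination (w2*w0) * h
    · linear_combination (w2*w1) * h
    · linear_combination (w2*w2) * h

set_option maxHeartbeats 2000000 in
/-- The diagonal 3×3 block `U^{(i,i)}` of the Hecke algebra representation attached to the
cell system of `𝒜^((2n+1)*)`, for `q = exp(iπ/(2n+1))` and `2 ≤ i ≤ n−1`, has trace `[2]`
and satisfies the Hecke relation `U² = [2] U`. -/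
theorem Astar_hecke_diagonal_block (n : ℕ) (hn : 3 ≤ n)
    (i : ℤ) (hi : 2 ≤ i) (hi' : i ≤ (n : ℤ) - 1) :
    let N := 2 * n + 1
    let U : Matrix (Fin 3) (Fin 3) ℝ :=
      !![qi N i * qi N (2*i - 3) / (qi N (i - 1) * qi N (2*i - 1)),
         (-1 : ℝ) ^ (i + 1) * Real.sqrt (qi N (2*i - 3)) / (qi N (i - 1) * Real.sqrt (qi N (2*i - 1))),
         Real.sqrt (qi N (2*i - 3) * qi N (2*i + 1)) / qi N (2*i - 1);
         (-1 : ℝ) ^ (i + 1) * Real.sqrt (qi N (2*i - 3)) / (qi N (i - 1) * Real.sqrt (qi N (2*i - 1))),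
         1 / (qi N (i - 1) * qi N i),
         (-1 : ℝ) ^ (i + 1) * Real.sqrt (qi N (2*i + 1)) / (qi N i * Real.sqrt (qi N (2*i - 1)));
         Real.sqrt (qi N (2*i - 3) * qi N (2*i + 1)) / qi N (2*i - 1),
         (-1 : ℝ) ^ (i + 1) * Real.sqrt (qi N (2*i + 1)) / (qi N i * Real.sqrt (qi N (2*i - 1))),
         qi N (i - 1) * qi N (2*i + 1) / (qi N i * qi N (2*i - 1))]
    U.trace = qi N 2 ∧ U * U = qi N 2 • U := by
  intro N U
  have hNn : N = 2 * n + 1 := rfl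
  have hNpos : (0:ℝ) < (N:ℝ) := by exact_mod_cast Nat.pos_of_ne_zero (by omega)
  set t := Real.pi / N with htdef
  have ht0 : 0 < t := div_pos Real.pi_pos hNpos
  have htpi : t < Real.pi := by
    rw [htdef]
    apply div_lt_self Real.pi_pos
    exact_mod_cast (by omega : 1 < N)
  have hst : 0 < Real.sin t := Real.sin_pos_of_pos_of_lt_pi ht0 htpi
  have hqi : ∀ m : ℤ, qi N m = Real.sin ((m:ℝ) * t) / Real.sin t := fun m => by
    rw [qi, htdef, mul_div_assoc]
  have hsin_pos : ∀ m : ℤ, 0 < m → m < (N:ℤ) → 0 < Real.sin ((m:ℝ) * t) := by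
    intro m h0 h1
    apply Real.sin_pos_of_pos_of_lt_pi
    · exact mul_pos (by exact_mod_cast h0) ht0
    · have hm : (m:ℝ) < (N:ℝ) := by exact_mod_cast h1
      rw [htdef]
      rw [mul_div_assoc'] at *
      rw [div_lt_iff₀ hNpos]
      nlinarith [Real.pi_pos, (by exact_mod_cast h0 : (0:ℝ) < (m:ℝ))]
  have qi_pos : ∀ m : ℤ, 0 < m → m < (N:ℤ) → 0 < qi N m := fun m h0 h1 => by
    rw [hqi]; exact div_pos (hsin_pos m h0 h1) hst
  have hA : 0 < qi N (i-1) := qi_pos _ (by omega) (by omega)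
  have hB : 0 < qi N i := qi_pos _ (by omega) (by omega)
  have hC : 0 < qi N (2*i-3) := qi_pos _ (by omega) (by omega)
  have hD : 0 < qi N (2*i-1) := qi_pos _ (by omega) (by omega)
  have hE : 0 < qi N (2*i+1) := qi_pos _ (by omega) (by omega)
  -- square roots
  obtain ⟨a, ha, haq⟩ : ∃ a : ℝ, 0 < a ∧ qi N (i-1) = a * a :=
    ⟨Real.sqrt _, Real.sqrt_pos.2 hA, (Real.mul_self_sqrt hA.le).symm⟩
  obtain ⟨b, hb, hbq⟩ : ∃ b : ℝ, 0 < b ∧ qi N i = b * b :=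
    ⟨Real.sqrt _, Real.sqrt_pos.2 hB, (Real.mul_self_sqrt hB.le).symm⟩
  obtain ⟨c, hc, hcq⟩ : ∃ c : ℝ, 0 < c ∧ qi N (2*i-3) = c * c :=
    ⟨Real.sqrt _, Real.sqrt_pos.2 hC, (Real.mul_self_sqrt hC.le).symm⟩
  obtain ⟨d, hd, hdq⟩ : ∃ d : ℝ, 0 < d ∧ qi N (2*i-1) = d * d :=
    ⟨Real.sqrt _, Real.sqrt_pos.2 hD, (Real.mul_self_sqrt hD.le).symm⟩
  obtain ⟨e, he, heq⟩ : ∃ e : ℝ, 0 < e ∧ qi N (2*i+1) = e * e :=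
    ⟨Real.sqrt _, Real.sqrt_pos.2 hE, (Real.mul_self_sqrt hE.le).symm⟩
  have ha' : a ≠ 0 := ha.ne'
  have hb' : b ≠ 0 := hb.ne'
  have hc' : c ≠ 0 := hc.ne'
  have hd' : d ≠ 0 := hd.ne'
  have he' : e ≠ 0 := he.ne'
  have hsc : Real.sqrt (qi N (2*i-3)) = c := by rw [hcq, Real.sqrt_mul_self hc.le]
  have hsd : Real.sqrt (qi N (2*i-1)) = d := by rw [hdq, Real.sqrt_mul_self hd.le]
  have hse : Real.sqrt (qi N (2*i+1)) = e := by rw [heq, Real.sqrt_mul_self he.le]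
  have hsce : Real.sqrt (qi N (2*i-3) * qi N (2*i+1)) = c * e := by
    rw [hcq, heq, show c*c*(e*e) = (c*e)*(c*e) by ring, Real.sqrt_mul_self (by positivity)]
  -- sign
  obtain ⟨ε, hε1, hεdef⟩ : ∃ ε : ℝ, (ε = 1 ∨ ε = -1) ∧ (-1:ℝ) ^ (i+1) = ε := by
    refine ⟨_, ?_, rfl⟩
    rcases Int.even_or_odd (i+1) with h | h
    · exact Or.inl (h.neg_one_zpow)
    · exact Or.inr (h.neg_one_zpow)
  -- the key quantum-integer identity
  have h2cos : qi N 2 = 2 * Real.cos t := by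
    rw [hqi]
    have : ((2:ℤ):ℝ) * t = 2 * t := by push_cast; ring
    rw [this, Real.sin_two_mul]
    field_simp
  set x := (i:ℝ) * t with hx
  have ex1 : ((i-1:ℤ):ℝ) * t = x - t := by rw [hx]; push_cast; ring
  have ex3 : ((2*i-3:ℤ):ℝ) * t = 2*x - 3*t := by rw [hx]; push_cast; ring
  have ex4 : ((2*i-1:ℤ):ℝ) * t = 2*x - t := by rw [hx]; push_cast; ring
  have ex5 : ((2*i+1:ℤ):ℝ) * t = 2*x + t := by rw [hx]; push_cast; ring
  have hsx : 0 < Real.sin x := hsin_pos i (by omega) (by omega)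
  have hsxt : 0 < Real.sin (x - t) := by
    rw [← ex1]; exact hsin_pos (i-1) (by omega) (by omega)
  have hsd2 : 0 < Real.sin (2*x - t) := by
    rw [← ex4]; exact hsin_pos (2*i-1) (by omega) (by omega)
  have hKey : qi N i * qi N (2*i-3) / (qi N (i-1) * qi N (2*i-1))
      + 1 / (qi N (i-1) * qi N i)
      + qi N (i-1) * qi N (2*i+1) / (qi N i * qi N (2*i-1)) = qi N 2 := by
    rw [h2cos]
    simp only [hqi]
    rw [ex1, ex3, ex4, ex5]
    exact qsum' x t hst.ne' hsx.ne' hsxt.ne' hsd2.ne'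
  have hsum : (ε*(b*c)/(a*d)) * (ε*(b*c)/(a*d)) + (1/(a*b)) * (1/(a*b))
      + (ε*(a*e)/(b*d)) * (ε*(a*e)/(b*d)) = qi N 2 := by
    rw [← hKey, haq, hbq, hcq, hdq, heq]
    rcases hε1 with rfl | rfl <;> field_simp <;> ring
  have e00 : b*b*(c*c)/(a*a*(d*d)) = (ε*(b*c)/(a*d))*(ε*(b*c)/(a*d)) := by
    rcases hε1 with rfl | rfl <;> field_simp <;> ring
  have e01 : ε*c/(a*a*d) = (ε*(b*c)/(a*d))*(1/(a*b)) := by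
    rcases hε1 with rfl | rfl <;> field_simp <;> ring
  have e02 : c*e/(d*d) = (ε*(b*c)/(a*d))*(ε*(a*e)/(b*d)) := by
    rcases hε1 with rfl | rfl <;> field_simp <;> ring
  have e11 : 1/(a*a*(b*b)) = (1/(a*b))*(1/(a*b)) := by
    field_simp
  have e12 : ε*e/(b*b*d) = (1/(a*b))*(ε*(a*e)/(b*d)) := by
    rcases hε1 with rfl | rfl <;> field_simp <;> ring
  have e22 : a*a*(e*e)/(b*b*(d*d)) = (ε*(a*e)/(b*d))*(ε*(a*e)/(b*d)) := by
    rcases hε1 with rfl | rfl <;> field_simp <;> ring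
  have hU : U = !![(ε*(b*c)/(a*d))*(ε*(b*c)/(a*d)), (ε*(b*c)/(a*d))*(1/(a*b)),
        (ε*(b*c)/(a*d))*(ε*(a*e)/(b*d));
      (ε*(b*c)/(a*d))*(1/(a*b)), (1/(a*b))*(1/(a*b)), (1/(a*b))*(ε*(a*e)/(b*d));
      (ε*(b*c)/(a*d))*(ε*(a*e)/(b*d)), (1/(a*b))*(ε*(a*e)/(b*d)),
        (ε*(a*e)/(b*d))*(ε*(a*e)/(b*d))] := by
    show (!![qi N i * qi N (2*i - 3) / (qi N (i - 1) * qi N (2*i - 1)),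
         (-1 : ℝ) ^ (i + 1) * Real.sqrt (qi N (2*i - 3)) / (qi N (i - 1) * Real.sqrt (qi N (2*i - 1))),
         Real.sqrt (qi N (2*i - 3) * qi N (2*i + 1)) / qi N (2*i - 1);
         (-1 : ℝ) ^ (i + 1) * Real.sqrt (qi N (2*i - 3)) / (qi N (i - 1) * Real.sqrt (qi N (2*i - 1))),
         1 / (qi N (i - 1) * qi N i),
         (-1 : ℝ) ^ (i + 1) * Real.sqrt (qi N (2*i + 1)) / (qi N i * Real.sqrt (qi N (2*i - 1)));
         Real.sqrt (qi N (2*i - 3) * qi N (2*i + 1)) / qi N (2*i - 1),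
         (-1 : ℝ) ^ (i + 1) * Real.sqrt (qi N (2*i + 1)) / (qi N i * Real.sqrt (qi N (2*i - 1))),
         qi N (i - 1) * qi N (2*i + 1) / (qi N i * qi N (2*i - 1))] : Matrix (Fin 3) (Fin 3) ℝ) = _
    rw [hεdef, hsc, hsd, hse, hsce, haq, hbq, hcq, hdq, heq,
      e00, e01, e02, e11, e12, e22]
  rw [hU]
  exact rank_one_proj' _ _ _ _ hsum
end

section
/- Let q = exp(iπ/12), and set x₊ = √([2]_q[4]_q + √([2]_q[4]_q)) and x₋ = √([2]_q[4]_q − √([2]_q[4]_q)) (both positive reals). Let ε₁ = 1, ε₂ = e^{2πi/3}, ε₃ = e^{−2πi/3}. Then there do NOT exist complex numbers c₁, c₂, c₃ of modulus 1 and a unitary 2×2 complex matrix u = (u_{st}) such that for all l ∈ {1,2,3}: ε_l x₊ = c_l ( u₁₁ ε_l x₋ + u₁₂ \overline{ε_l} x₊ ) and \overline{ε_l} x₋ = c_l ( u₂₁ ε_l x₋ + u₂₂ \overline{ε_l} x₊ ). (This establishes that the two orbifold cell systems W⁺ and W⁻ on the exceptional graph ℰ₁⁽¹²⁾, whose cells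 on the triangles through the double edge are W^{±}_{p,j_l,r(α)} = ε_l √[2] x_± and W^{±}_{p,j_l,r(α')} = \overline{ε_l} √[2] x_∓, are inequivalent: c_l plays the role of the gauge phases u_{p,j_l} u_{j_l,r} and u the gauge unitary on the double edge α, α'.) -/
open Complex in
lemma qi_prod_gt_one : 1 < qi 12 2 * qi 12 4 := by
  have h2 : qi 12 2 = (1/2) / Real.sin (Real.pi/12) := by
    unfold qi; norm_num
    rw [show ((2:ℝ) * Real.pi / 12) = Real.pi/6 by ring, Real.sin_pi_div_six]
  have h4 : qi 12 4 = (Real.sqrt 3 / 2) / Real.sin (Real.pi/12) := by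
    unfold qi; norm_num
    rw [show ((4:ℝ) * Real.pi / 12) = Real.pi/3 by ring, Real.sin_pi_div_three]
  have hspos : 0 < Real.sin (Real.pi/12) :=
    Real.sin_pos_of_pos_of_lt_pi (by positivity) (by nlinarith [Real.pi_pos])
  have hslt : Real.sin (Real.pi/12) < 1/2 := by
    have := Real.sin_lt (show 0 < Real.pi/12 by positivity)
    nlinarith [Real.pi_lt_d2]
  have h3 : Real.sqrt 3 ^ 2 = 3 := Real.sq_sqrt (by norm_num)
  have h3n : (0:ℝ) ≤ Real.sqrt 3 := Real.sqrt_nonneg 3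
  have h31 : 1 ≤ Real.sqrt 3 := by nlinarith
  rw [h2, h4, div_mul_div_comm, lt_div_iff₀ (by positivity)]
  nlinarith

/-- Inequivalence of the two orbifold cell systems `W⁺`, `W⁻` on the exceptional graph
`ℰ₁⁽¹²⁾`: with `q = exp(iπ/12)`, `x₊ = √([2][4] + √([2][4]))`, `x₋ = √([2][4] − √([2][4]))`,
`ε₁ = 1`, `ε₂ = e^{2πi/3}`, `ε₃ = e^{−2πi/3}`, there are no gauge phases `c_l` of modulus 1 and
no unitary 2×2 matrix `u` with `ε_l x₊ = c_l (u₀₀ ε_l x₋ + u₀₁ ε̄_l x₊)` and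
`ε̄_l x₋ = c_l (u₁₀ ε_l x₋ + u₁₁ ε̄_l x₊)` for all `l`. -/
theorem E1_12_cell_systems_inequivalent :
    let xp : ℝ := Real.sqrt (qi 12 2 * qi 12 4 + Real.sqrt (qi 12 2 * qi 12 4))
    let xm : ℝ := Real.sqrt (qi 12 2 * qi 12 4 - Real.sqrt (qi 12 2 * qi 12 4))
    let ε : Fin 3 → ℂ := ![1, Complex.exp (2 * Real.pi * Complex.I / 3),
                           Complex.exp (-(2 * Real.pi * Complex.I) / 3)]
    ¬ ∃ (c : Fin 3 → ℂ) (u : Matrix (Fin 2) (Fin 2) ℂ),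
        (∀ l, ‖c l‖ = 1) ∧
        u ∈ Matrix.unitaryGroup (Fin 2) ℂ ∧
        (∀ l, ε l * (xp : ℂ)
                = c l * (u 0 0 * (ε l * (xm : ℂ)) + u 0 1 * ((starRingEnd ℂ) (ε l) * (xp : ℂ))) ∧
              (starRingEnd ℂ) (ε l) * (xm : ℂ)
                = c l * (u 1 0 * (ε l * (xm : ℂ)) + u 1 1 * ((starRingEnd ℂ) (ε l) * (xp : ℂ)))) := by
  intro xp xm ε
  rintro ⟨c, u, hc, hu, h⟩
  -- basic real facts
  set S : ℝ := qi 12 2 * qi 12 4 with hSdef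
  have hS1 : 1 < S := qi_prod_gt_one
  have hS0 : 0 < S := by linarith
  have hrS : Real.sqrt S < S := by
    nlinarith [Real.sq_sqrt hS0.le, Real.sqrt_nonneg S]
  have hrSpos : 0 < Real.sqrt S := Real.sqrt_pos.mpr hS0
  have hxmpos : 0 < xm := Real.sqrt_pos.mpr (by linarith)
  have hxppos : 0 < xp := Real.sqrt_pos.mpr (by linarith)
  have hlt : xm < xp := Real.sqrt_lt_sqrt (by linarith) (by linarith)
  -- notation
  set w : ℂ := Complex.exp (2 * Real.pi * Complex.I / 3) with hwdef
  set P : ℂ := (xp : ℂ) with hPdef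
  set M : ℂ := (xm : ℂ) with hMdef
  have hP0 : P ≠ 0 := Complex.ofReal_ne_zero.mpr (ne_of_gt hxppos)
  have hM0 : M ≠ 0 := Complex.ofReal_ne_zero.mpr (ne_of_gt hxmpos)
  -- w is a primitive cube root of unity
  have hw3 : w ^ 3 = 1 := by
    rw [hwdef, ← Complex.exp_nat_mul]
    push_cast
    rw [show (3:ℂ) * (2*Real.pi*Complex.I/3) = 2*Real.pi*Complex.I by ring]
    exact Complex.exp_two_pi_mul_I
  have hw1 : w ≠ 1 := by
    intro hEq
    have h1 : (2*(Real.pi:ℂ)*Complex.I/3) = ((2*Real.pi/3 : ℝ):ℂ) * Complex.I := by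
      push_cast; ring
    have h2 : w.im = Real.sin (2*Real.pi/3) := by
      rw [hwdef, h1, Complex.exp_ofReal_mul_I_im]
    have h3 : Real.sin (2*Real.pi/3) > 0 := by
      apply Real.sin_pos_of_pos_of_lt_pi <;> nlinarith [Real.pi_pos]
    rw [hEq] at h2
    simp at h2
    linarith
  have hw0 : w ≠ 0 := by
    intro hEq
    rw [hEq] at hw3
    norm_num at hw3
  -- the third epsilon is w^2
  have hε2 : Complex.exp (-(2 * Real.pi * Complex.I) / 3) = w ^ 2 := by
    rw [hwdef, sq, ← Complex.exp_add,
      show (2*(Real.pi:ℂ)*Complex.I/3 + 2*Real.pi*Complex.I/3)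
          = -(2*Real.pi*Complex.I)/3 + 2*Real.pi*Complex.I by ring,
      Complex.exp_add, Complex.exp_two_pi_mul_I, mul_one]
  -- conjugates
  have hcw : (starRingEnd ℂ) w = w ^ 2 := by
    rw [hwdef, ← Complex.exp_conj]
    rw [show (starRingEnd ℂ) (2*(Real.pi:ℂ)*Complex.I/3) = -(2*Real.pi*Complex.I)/3 by
      simp [map_div₀, map_mul, map_ofNat, Complex.conj_I, Complex.conj_ofReal]]
    exact hε2
  have hcw2 : (starRingEnd ℂ) (w ^ 2) = w := by
    rw [map_pow, hcw]
    linear_combination w * hw3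
  -- extract the six equations
  have hε0 : ε 0 = 1 := rfl
  have hε1 : ε 1 = w := rfl
  have hε2' : ε 2 = w ^ 2 := hε2
  obtain ⟨H0a, H0b⟩ := h 0
  obtain ⟨H1a, H1b⟩ := h 1
  obtain ⟨H2a, H2b⟩ := h 2
  rw [hε0] at H0a H0b
  rw [hε1, hcw] at H1a H1b
  rw [hε2', hcw2] at H2a H2b
  simp only [map_one, one_mul] at H0a H0b
  -- nonvanishing of the phases
  have hc0 : c 0 ≠ 0 := by
    intro hEq; have := hc 0; rw [hEq] at this; simp at this
  have hc1 : c 1 ≠ 0 := by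
    intro hEq; have := hc 1; rw [hEq] at this; simp at this
  have hc2 : c 2 ≠ 0 := by
    intro hEq; have := hc 2; rw [hEq] at this; simp at this
  set a := u 0 0 with ha_def
  set b := u 0 1 with hb_def
  set g := u 1 0 with hg_def
  set d := u 1 1 with hd_def
  -- normalized equations
  have e1 : (c 0)⁻¹ * P = a * M + b * P := by
    rw [inv_mul_eq_iff_eq_mul₀ hc0]; linear_combination H0a
  have e2 : (c 1)⁻¹ * P = a * M + w * (b * P) := by
    rw [inv_mul_eq_iff_eq_mul₀ hc1]
    linear_combination w^2 * H1a + (c 1 * a * M + c 1 * (b * P) * w - P) * hw3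
  have e3 : (c 2)⁻¹ * P = a * M + w^2 * (b * P) := by
    rw [inv_mul_eq_iff_eq_mul₀ hc2]
    linear_combination w * H2a + (c 2 * a * M - P) * hw3
  have e4 : (c 0)⁻¹ * M = g * M + d * P := by
    rw [inv_mul_eq_iff_eq_mul₀ hc0]; linear_combination H0b
  have e5 : (c 1)⁻¹ * M = w^2 * (g * M) + d * P := by
    rw [inv_mul_eq_iff_eq_mul₀ hc1]
    linear_combination w * H1b + (c 1 * d * P - M) * hw3
  have e6 : (c 2)⁻¹ * M = w * (g * M) + d * P := by
    rw [inv_mul_eq_iff_eq_mul₀ hc2]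
    linear_combination w^2 * H2b + (c 2 * (g * M) * w + c 2 * d * P - M) * hw3
  -- eliminate the phases
  have f1 : (c 0)⁻¹ - (c 1)⁻¹ = b * (1 - w) := by
    apply mul_right_cancel₀ hP0
    linear_combination e1 - e2
  have f2 : (c 0)⁻¹ - (c 2)⁻¹ = b * (1 - w^2) := by
    apply mul_right_cancel₀ hP0
    linear_combination e1 - e3
  have g1 : (c 0)⁻¹ - (c 1)⁻¹ = g * (1 - w^2) := by
    apply mul_right_cancel₀ hM0
    linear_combination e4 - e5
  have g2 : (c 0)⁻¹ - (c 2)⁻¹ = g * (1 - w) := by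
    apply mul_right_cancel₀ hM0
    linear_combination e4 - e6
  have hbz : b * (3 * (w^2 - w)) = 0 := by
    linear_combination -(1-w) * f1 + (1-w) * g1 + (1-w^2) * f2 - (1-w^2) * g2 + b * w * hw3
  have hb : b = 0 := by
    rcases mul_eq_zero.mp hbz with h' | h'
    · exact h'
    · exfalso
      have : w^2 - w = w * (w - 1) := by ring
      rw [this] at h'
      have := mul_eq_zero.mp h'
      rcases this with h'' | h''
      · norm_num at h''
      · rcases mul_eq_zero.mp h'' with h3 | h3
        · exact hw0 h3
        · exact hw1 (by linear_combination h3)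
  -- unitarity gives |a| = 1 once b = 0
  have hu2 : u * star u = 1 := Matrix.mem_unitaryGroup_iff.mp hu
  have h00 : (u * star u) 0 0 = (1 : Matrix (Fin 2) (Fin 2) ℂ) 0 0 := by rw [hu2]
  simp only [Matrix.mul_apply, Fin.sum_univ_two, Matrix.star_apply,
    Matrix.one_apply_eq, Matrix.star_eq_conjTranspose, Matrix.conjTranspose_apply,
    Complex.star_def] at h00
  rw [← ha_def, ← hb_def, hb] at h00
  simp only [map_zero, mul_zero, add_zero] at h00
  -- |a| = 1
  have habs : ‖a‖ = 1 := by
    have := congrArg norm h00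
    rw [norm_mul, Complex.norm_conj, norm_one] at this
    nlinarith [norm_nonneg a]
  -- derive xp = xm, contradiction
  rw [hb] at H0a
  have hfin := congrArg norm H0a
  simp only [zero_mul, add_zero, norm_mul, hc 0, habs, one_mul] at hfin
  rw [hPdef, hMdef] at hfin
  simp only [Complex.norm_real, Real.norm_eq_abs, abs_of_pos hxppos, abs_of_pos hxmpos] at hfin
  linarith
end

section
/- Let k ≥ 1 be an integer and q = exp(iπ/(3k+3)), so that [k]_q and [k+2]_q are positive reals with [k]_q ≠ [k+2]_q. Let ε₁ = 1, ε₂ = e^{2πi/3}, ε₃ = e^{−2πi/3}. Then there do NOT exist complex numbers c₁, c₂, c₃ of modulus 1 and a unitary 2×2 complex matrix u = (u_{st}) such that for all l ∈ {1,2,3}: ε_l = c_l ( u₁₁ \overline{ε_l} + √([k+2]_q/[k]_q) · u₁₂ ε_l ) and \overline{ε_l} = c_l ( √([k]_q/[k+2]_q) · u₂₁ \overline{ε_l} + u₂₂ ε_l ). (This establishes that the orbifold cell system W on the graph 𝒟^((3k+3)) and its complex conjugate \overline{W} — whose cells through the triple point are W^{(γ)}_{(k−1,k),(k,k)_l,(k,k−1)}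 = ε_l [k]√([k+1]³[k+2])/(√3 [2]) and W^{(γ')}_{(k−1,k),(k,k)_l,(k,k−1)} = \overline{ε_l} [k+2]√([k][k+1]³)/(√3 [2]) — are inequivalent cell systems: c_l plays the role of the gauge phases and u the gauge unitary on the double edge γ, γ'.) -/
open Real in
lemma qi_pos_aux (N m : ℕ) (h1 : 1 ≤ m) (h2 : m < N) : 0 < qi N m := by
  have hN : (1:ℝ) < N := by exact_mod_cast lt_of_le_of_lt h1 h2
  have hNpos : (0:ℝ) < N := by linarith
  have hden : 0 < Real.sin (π / N) := by
    apply Real.sin_pos_of_pos_of_lt_pi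
    · positivity
    · rw [div_lt_iff₀ hNpos]; nlinarith [Real.pi_pos]
  have hnum : 0 < Real.sin ((m:ℤ) * π / N) := by
    apply Real.sin_pos_of_pos_of_lt_pi
    · have : (1:ℝ) ≤ (m:ℝ) := by exact_mod_cast h1
      push_cast; positivity
    · push_cast
      rw [div_lt_iff₀ hNpos]
      have : (m:ℝ) < N := by exact_mod_cast h2
      nlinarith [Real.pi_pos]
  exact div_pos hnum hden

open Real in
lemma qi_ne_aux (k : ℕ) (hk : 1 ≤ k) : qi (3*k+3) k ≠ qi (3*k+3) (k+2) := by
  set N : ℕ := 3*k+3 with hN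
  have hNpos : (0:ℝ) < N := by positivity
  have hden : 0 < Real.sin (π / N) := by
    apply Real.sin_pos_of_pos_of_lt_pi
    · positivity
    · rw [div_lt_iff₀ hNpos]
      have : (1:ℝ) < N := by
        have : 1 < N := by omega
        exact_mod_cast this
      nlinarith [Real.pi_pos]
  have hmem : ∀ m : ℕ, 2*m ≤ N → ((m:ℝ) * π / N) ∈ Set.Icc (-(π/2)) (π/2) := by
    intro m hm
    constructor
    · have : (0:ℝ) ≤ (m:ℝ)*π/N := by positivity
      nlinarith [Real.pi_pos]
    · rw [div_le_iff₀ hNpos]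
      have : (2:ℝ)*m ≤ N := by exact_mod_cast hm
      nlinarith [Real.pi_pos]
  have h1 : 2*k ≤ N := by omega
  have h2 : 2*(k+2) ≤ N := by omega
  intro h
  unfold qi at h
  rw [div_left_inj' (ne_of_gt hden)] at h
  have := Real.injOn_sin (hmem k h1) (hmem (k+2) h2) (by push_cast at h ⊢; convert h using 3)
  have hπ := Real.pi_pos
  have hkk : (k:ℝ) * π / N = ((k:ℝ)+2) * π / N := by push_cast at this ⊢; convert this using 2
  rw [div_eq_div_iff hNpos.ne' hNpos.ne'] at hkk
  nlinarith

/-- Inequivalence of the orbifold cell system `W` on `𝒟^((3k+3))` and its complex conjugate: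
with `q = exp(iπ/(3k+3))`, `ε₁ = 1`, `ε₂ = e^{2πi/3}`, `ε₃ = e^{−2πi/3}`, there are no gauge
phases `c_l` of modulus 1 and no unitary 2×2 matrix `u` with
`ε_l = c_l (u₀₀ ε̄_l + √([k+2]/[k]) u₀₁ ε_l)` and
`ε̄_l = c_l (√([k]/[k+2]) u₁₀ ε̄_l + u₁₁ ε_l)` for all `l`. -/
theorem D3k3_cell_system_conjugate_inequivalent (k : ℕ) (hk : 1 ≤ k) :
    let N := 3 * k + 3
    let ε : Fin 3 → ℂ := ![1, Complex.exp (2 * Real.pi * Complex.I / 3),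
                           Complex.exp (-(2 * Real.pi * Complex.I) / 3)]
    ¬ ∃ (c : Fin 3 → ℂ) (u : Matrix (Fin 2) (Fin 2) ℂ),
        (∀ l, ‖c l‖ = 1) ∧
        u ∈ Matrix.unitaryGroup (Fin 2) ℂ ∧
        (∀ l, ε l = c l * (u 0 0 * (starRingEnd ℂ) (ε l)
                     + (Real.sqrt (qi N (k + 2) / qi N k) : ℂ) * u 0 1 * ε l) ∧
              (starRingEnd ℂ) (ε l)
                = c l * ((Real.sqrt (qi N k / qi N (k + 2)) : ℂ) * u 1 0 * (starRingEnd ℂ) (ε l)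
                     + u 1 1 * ε l)) := by
  intro N ε
  rintro ⟨c, u, hc, hu, h⟩
  -- basic quantities
  have hA : 0 < qi N k := qi_pos_aux N k hk (by omega)
  have hB : 0 < qi N (k+2) := by
    have := qi_pos_aux N (k+2) (by omega) (by omega)
    push_cast at this; exact this
  have hAB : qi N k ≠ qi N (k+2) := by
    have := qi_ne_aux k hk
    push_cast at this; exact this
  set A := qi N k with hAdef
  set B := qi N (k+2) with hBdef
  set sR := Real.sqrt (B / A) with hsR
  set tR := Real.sqrt (A / B) with htR
  have hs2 : sR ^ 2 = B / A := Real.sq_sqrt (by positivity)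
  have hstR : sR * tR = 1 := by
    rw [hsR, htR, ← Real.sqrt_mul (by positivity)]
    rw [show B / A * (A / B) = 1 by field_simp]
    exact Real.sqrt_one
  -- ω facts
  set ω : ℂ := Complex.exp (2 * Real.pi * Complex.I / 3) with hω
  have hω3 : ω ^ 3 = 1 := by
    rw [hω, ← Complex.exp_nat_mul]
    rw [show ((3:ℕ):ℂ) * (2 * Real.pi * Complex.I / 3) = 2 * Real.pi * Complex.I by
      push_cast; ring]
    exact Complex.exp_two_pi_mul_I
  have hωne0 : ω ≠ 0 := Complex.exp_ne_zero _
  have hω1 : ω ≠ 1 := by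
    rw [hω]
    simp only [ne_eq, Complex.exp_eq_one_iff]
    rintro ⟨n, hn⟩
    have h2pi : (2 * (Real.pi:ℂ) * Complex.I) ≠ 0 := by
      simp [Real.pi_ne_zero, Complex.I_ne_zero]
    have h2 : (2 * (Real.pi:ℂ) * Complex.I) * 1 = (2 * (Real.pi:ℂ) * Complex.I) * (3 * n) := by
      linear_combination 3 * hn
    have h3 : (1:ℂ) = 3 * n := mul_left_cancel₀ h2pi h2
    have : (1:ℤ) = 3 * n := by exact_mod_cast h3
    omega
  have hconj : (starRingEnd ℂ) ω = ω ^ 2 := by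
    have h1 : (starRingEnd ℂ) ω = Complex.exp (-(2 * Real.pi * Complex.I / 3)) := by
      rw [hω, ← Complex.exp_conj]
      congr 1
      simp only [map_div₀, map_mul, map_ofNat, Complex.conj_I, Complex.conj_ofReal]
      ring
    have h2 : ω ^ 2 = Complex.exp (-(2 * Real.pi * Complex.I / 3) + 2 * Real.pi * Complex.I) := by
      rw [hω, sq, ← Complex.exp_add]
      congr 1; ring
    rw [h1, h2, Complex.exp_add, Complex.exp_two_pi_mul_I, mul_one]
  have hε2 : Complex.exp (-(2 * (Real.pi:ℂ) * Complex.I) / 3) = ω ^ 2 := by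
    rw [← hconj, hω, ← Complex.exp_conj]
    congr 1
    simp only [map_div₀, map_mul, map_ofNat, Complex.conj_I, Complex.conj_ofReal]
    ring
  have hconj2 : (starRingEnd ℂ) (ω ^ 2) = ω := by
    rw [map_pow, hconj]
    linear_combination ω * hω3
  have hrel : ω ^ 2 + ω + 1 = 0 := by
    have : (ω - 1) * (ω ^ 2 + ω + 1) = 0 := by linear_combination hω3
    rcases mul_eq_zero.mp this with h' | h'
    · exact absurd (by linear_combination h') hω1
    · exact h'
  -- names
  set a := u 0 0
  set b := u 0 1
  set e := u 1 0
  set d := u 1 1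
  set sC : ℂ := (sR : ℂ) with hsC
  set tC : ℂ := (tR : ℂ) with htC
  have hstC : sC * tC = 1 := by
    rw [hsC, htC]; exact_mod_cast congrArg (fun x : ℝ => (x : ℂ)) hstR
  have hcne : ∀ l, c l ≠ 0 := by
    intro l h0
    have := hc l
    rw [h0] at this
    simp at this
  -- extract the six equations
  have h0 := h 0
  have h1 := h 1
  have h2 := h 2
  simp only [ε, Matrix.cons_val_zero, Matrix.cons_val_one, Matrix.head_cons, map_one,
    Matrix.cons_val_two, Matrix.tail_cons] at h0 h1 h2
  rw [hε2] at h2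
  rw [hconj] at h1
  rw [hconj2] at h2
  obtain ⟨h01, h02⟩ := h0
  obtain ⟨h11, h12⟩ := h1
  obtain ⟨h21, h22⟩ := h2
  -- the three relations
  have E0 : a + sC * b = tC * e + d := by
    apply mul_left_cancel₀ (hcne 0)
    linear_combination -h01 + h02
  have E1 : a * ω + sC * b = tC * e + d * ω ^ 2 := by
    apply mul_left_cancel₀ (hcne 1)
    linear_combination (-(ω^2)) * h11 + ω * h12 +
      (c 1 * tC * e - c 1 * a * ω - c 1 * sC * b) * hω3
  have E2 : a * ω ^ 2 + sC * b = tC * e + d * ω := by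
    apply mul_left_cancel₀ (hcne 2)
    linear_combination (-ω) * h21 + ω ^ 2 * h22 +
      (c 2 * tC * e + c 2 * d * ω - c 2 * sC * b) * hω3
  have hsb : sC * b = tC * e := by
    linear_combination (E0 + E1 + E2) / 3 + ((d - a) / 3) * hrel
  have had : a = d := by linear_combination E0 - hsb
  have h5 : a * (ω - ω ^ 2) = 0 := by linear_combination E1 - hsb - ω ^ 2 * had
  have hωdiff : ω - ω ^ 2 ≠ 0 := by
    intro h'
    apply hω1
    have : ω * (1 - ω) = 0 := by linear_combination h'
    rcases mul_eq_zero.mp this with h'' | h''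
    · exact absurd h'' hωne0
    · linear_combination -h''
  have ha : a = 0 := by
    rcases mul_eq_zero.mp h5 with h' | h'
    · exact h'
    · exact absurd h' hωdiff
  have hd : d = 0 := by rw [← had]; exact ha
  have he : e = sC ^ 2 * b := by
    linear_combination (-sC) * hsb - e * hstC
  -- unitarity
  have hu1 : star u * u = 1 := hu.1
  have h00 : (star u * u) 0 0 = (1 : Matrix (Fin 2) (Fin 2) ℂ) 0 0 := by rw [hu1]
  have h11' : (star u * u) 1 1 = (1 : Matrix (Fin 2) (Fin 2) ℂ) 1 1 := by rw [hu1]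
  simp only [Matrix.mul_apply, Fin.sum_univ_two, Matrix.star_apply, Matrix.one_apply_eq,
    RCLike.star_def] at h00 h11'
  -- h00 : conj a * a + conj e * e = 1 ; h11' : conj b * b + conj d * d = 1
  have hX : (starRingEnd ℂ) e * e = 1 := by
    have h00' : (starRingEnd ℂ) a * a + (starRingEnd ℂ) e * e = 1 := h00
    rw [ha] at h00'; simpa using h00'
  have hY : (starRingEnd ℂ) b * b = 1 := by
    have h11'' : (starRingEnd ℂ) b * b + (starRingEnd ℂ) d * d = 1 := h11'
    rw [hd] at h11''; simpa using h11''
  rw [he] at hX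
  rw [map_mul, map_pow] at hX
  rw [show (starRingEnd ℂ) sC = sC by rw [hsC]; exact Complex.conj_ofReal _] at hX
  have hs4 : sC ^ 4 = 1 := by linear_combination hX - sC ^ 4 * hY
  have hsR4 : sR ^ 4 = 1 := by
    rw [hsC] at hs4; exact_mod_cast hs4
  have hBA2 : (B / A) ^ 2 = 1 := by
    rw [← hs2, ← pow_mul]; norm_num; exact hsR4
  rw [sq] at hBA2
  rcases mul_self_eq_one_iff.mp hBA2 with h' | h'
  · rw [div_eq_one_iff_eq hA.ne'] at h'
    exact hAB h'.symm
  · have hpos : 0 < B / A := div_pos hB hA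
    rw [h'] at hpos; norm_num at hpos
end
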